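/- arXiv:2203.17150 — 10 statements merged into one kernel-verified Lean document; each statement's English description precedes it below -/
import Mathlib

section
/- Efficiency of market-clearing tolls (Theorem 1): Let τ : E → ℝ with τ_e ≥ 0 for all e, and let a be an equilibrium assignment under τ with edge flow x. Suppose τ is market-clearing for a, i.e., x_e ≤ c_e for all e ∈ E and τ_e = 0 for every edge e with x_e < c_e. Then for every capacity-feasible assignment b, the total system cost of a is at most the total system cost of b. -/
open Finset

/-- System (untolled) cost incurred by a single user with value of time `vu` and
outside-option cost `lamu`, given their chosen option (a path or the outside option). -/
noncomputable def sysCost {E : Type*} (l : E → ℝ) (vu lamu : ℝ) : Option (Finset E) → ℝ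
  | some P => vu * ∑ e ∈ P, l e
  | none   => lamu

/-- Travel cost (including tolls) incurred by a single user, given their chosen option. -/
noncomputable def userCost {E : Type*} (l τ : E → ℝ) (vu lamu : ℝ) : Option (Finset E) → ℝ
  | some P => vu * ∑ e ∈ P, l e + ∑ e ∈ P, τ e
  | none   => lamu

/-- Total system cost of an assignment. -/
noncomputable def totalCost {E U : Type*} [Fintype U] (l : E → ℝ) (v lam : U → ℝ)
    (a : U → Option (Finset E)) : ℝ :=
  ∑ u, sysCost l (v u) (lam u) (a u)

/-- Edge flow of an assignment: the number of users whose chosen path contains `e`. -/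
noncomputable def edgeFlow {E U : Type*} [Fintype U] [DecidableEq E]
    (a : U → Option (Finset E)) (e : E) : ℝ :=
  ∑ u, (match a u with
    | some P => if e ∈ P then (1 : ℝ) else 0
    | none => 0)

noncomputable def tollCost {E : Type*} (τ : E → ℝ) : Option (Finset E) → ℝ
  | some P => ∑ e ∈ P, τ e
  | none   => 0

lemma sysCost_eq {E : Type*} (l τ : E → ℝ) (vu lamu : ℝ) (o : Option (Finset E)) :
    sysCost l vu lamu o = userCost l τ vu lamu o - tollCost τ o := by
  cases o <;> simp [sysCost, userCost, tollCost]

lemma toll_sum {E U : Type*} [Fintype E] [DecidableEq E] [Fintype U] (τ : E → ℝ)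
    (a : U → Option (Finset E)) :
    ∑ u, tollCost τ (a u) = ∑ e, τ e * edgeFlow a e := by
  unfold edgeFlow
  simp_rw [Finset.mul_sum]
  rw [Finset.sum_comm]
  congr 1; ext u
  cases h : a u with
  | none => simp [tollCost, h]
  | some P =>
    simp only [tollCost, h]
    simp_rw [mul_ite, mul_one, mul_zero]
    rw [Finset.sum_ite_mem, Finset.univ_inter]

/-- **Efficiency of market-clearing tolls** (Theorem 1): if `τ ≥ 0` is market-clearing for an
equilibrium assignment `a`, then `a` minimizes the total system cost among all
capacity-feasible assignments. -/
theorem efficiency_of_market_clearing_tolls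
    {E U : Type*} [Fintype E] [Nonempty E] [DecidableEq E] [Fintype U]
    (l c : E → ℝ) (hl : ∀ e, 0 ≤ l e) (hc : ∀ e, 0 ≤ c e)
    (v lam : U → ℝ) (hv : ∀ u, 0 ≤ v u) (hlam : ∀ u, 0 ≤ lam u)
    (paths : U → Finset (Finset E)) (hpaths : ∀ u, (paths u).Nonempty)
    (τ : E → ℝ) (hτ : ∀ e, 0 ≤ τ e)
    (a : U → Option (Finset E)) (ha : ∀ u P, a u = some P → P ∈ paths u)
    (heq : ∀ u, userCost l τ (v u) (lam u) (a u) =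
      min (lam u) ((paths u).inf' (hpaths u) fun P => v u * ∑ e ∈ P, l e + ∑ e ∈ P, τ e))
    (hacap : ∀ e, edgeFlow a e ≤ c e)
    (hmc : ∀ e, edgeFlow a e < c e → τ e = 0)
    (b : U → Option (Finset E)) (hb : ∀ u P, b u = some P → P ∈ paths u)
    (hbcap : ∀ e, edgeFlow b e ≤ c e) :
    totalCost l v lam a ≤ totalCost l v lam b := by
  have huser : ∀ u, userCost l τ (v u) (lam u) (a u) ≤ userCost l τ (v u) (lam u) (b u) := by
    intro u
    rw [heq u]
    cases hbu : b u with
    | none => simpa [userCost] using min_le_left _ _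
    | some P =>
      exact (min_le_right _ _).trans (Finset.inf'_le _ (hb u P hbu))
  have hsum : ∑ u, userCost l τ (v u) (lam u) (a u) ≤ ∑ u, userCost l τ (v u) (lam u) (b u) :=
    Finset.sum_le_sum fun u _ => huser u
  have key : ∑ u, tollCost τ (b u) ≤ ∑ u, tollCost τ (a u) := by
    rw [toll_sum, toll_sum]
    apply Finset.sum_le_sum
    intro e _
    have hxa : τ e * edgeFlow a e = τ e * c e := by
      rcases lt_or_eq_of_le (hacap e) with h | h
      · rw [hmc e h]; ring
      · rw [h]
    rw [hxa]
    exact mul_le_mul_of_nonneg_left (hbcap e) (hτ e)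
  have ta : totalCost l v lam a =
      ∑ u, userCost l τ (v u) (lam u) (a u) - ∑ u, tollCost τ (a u) := by
    rw [totalCost, ← Finset.sum_sub_distrib]
    exact Finset.sum_congr rfl fun u _ => sysCost_eq l τ (v u) (lam u) (a u)
  have tb : totalCost l v lam b =
      ∑ u, userCost l τ (v u) (lam u) (b u) - ∑ u, tollCost τ (b u) := by
    rw [totalCost, ← Finset.sum_sub_distrib]
    exact Finset.sum_congr rfl fun u _ => sysCost_eq l τ (v u) (lam u) (b u)
  rw [ta, tb]
  linarith
end

section
/- Weak duality bound: For every toll vector τ : E → ℝ with τ_e ≥ 0 for all e, and every capacity-feasible assignment b, the total system cost of b is at least Σ_{u∈U} min{ λ_u, min_{P∈𝒫_u} (v_u·Σ_{e∈P} l_e + Σ_{e∈P} τ_e) } − Σ_{e∈E} τ_e c_e. -/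
open Finset

/-- **Weak duality bound**: for any nonnegative tolls `τ` and any capacity-feasible
assignment `b`, the total system cost of `b` is at least the dual objective
`Σ_u min{λ_u, min_{P ∈ 𝒫_u} (v_u Σ_{e∈P} l_e + Σ_{e∈P} τ_e)} − Σ_e τ_e c_e`. -/
theorem weak_duality_bound
    {E U : Type*} [Fintype E] [Nonempty E] [DecidableEq E] [Fintype U]
    (l c : E → ℝ) (hl : ∀ e, 0 ≤ l e) (hc : ∀ e, 0 ≤ c e)
    (v lam : U → ℝ) (hv : ∀ u, 0 ≤ v u) (hlam : ∀ u, 0 ≤ lam u)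
    (paths : U → Finset (Finset E)) (hpaths : ∀ u, (paths u).Nonempty)
    (τ : E → ℝ) (hτ : ∀ e, 0 ≤ τ e)
    (b : U → Option (Finset E)) (hb : ∀ u P, b u = some P → P ∈ paths u)
    (hbcap : ∀ e, edgeFlow b e ≤ c e) :
    (∑ u, min (lam u)
        ((paths u).inf' (hpaths u) fun P => v u * ∑ e ∈ P, l e + ∑ e ∈ P, τ e)) -
      ∑ e, τ e * c e ≤ totalCost l v lam b := by
  set tp : U → ℝ := fun u => match b u with
    | some P => ∑ e ∈ P, τ e
    | none => 0 with htp
  have key : ∀ u, min (lam u)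
      ((paths u).inf' (hpaths u) fun P => v u * ∑ e ∈ P, l e + ∑ e ∈ P, τ e)
      ≤ sysCost l (v u) (lam u) (b u) + tp u := by
    intro u
    rcases hbu : b u with _ | P
    · simp [sysCost, htp, hbu, min_le_left]
    · have h1 : ((paths u).inf' (hpaths u) fun P => v u * ∑ e ∈ P, l e + ∑ e ∈ P, τ e)
          ≤ v u * ∑ e ∈ P, l e + ∑ e ∈ P, τ e := inf'_le _ (hb u P hbu)
      have h2 : sysCost l (v u) (lam u) (some P) + tp u
          = v u * ∑ e ∈ P, l e + ∑ e ∈ P, τ e := by simp [sysCost, htp, hbu]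
      rw [h2]
      exact le_trans (min_le_right _ _) h1
  have htpu : ∀ u, tp u = ∑ e, τ e * (match b u with
      | some P => if e ∈ P then (1:ℝ) else 0
      | none => 0) := by
    intro u
    rcases hbu : b u with _ | P
    · simp [htp, hbu]
    · simp [htp, hbu, mul_ite, mul_one, mul_zero, Finset.sum_ite_mem, Finset.univ_inter]
  have hsum : ∑ u, tp u ≤ ∑ e, τ e * c e := by
    have h3 : ∑ u, tp u = ∑ e, τ e * edgeFlow b e := by
      simp only [htpu, edgeFlow, Finset.mul_sum]
      exact Finset.sum_comm
    rw [h3]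
    exact Finset.sum_le_sum fun e _ => mul_le_mul_of_nonneg_left (hbcap e) (hτ e)
  have h4 := Finset.sum_le_sum (fun u (_ : u ∈ Finset.univ) => key u)
  rw [Finset.sum_add_distrib] at h4
  unfold totalCost
  linarith
end

section
/- Upper bound on the cumulative toll–slack product (Lemma 2): Under the toll update dynamics, suppose c_e ≥ 0 for all e ∈ E, and 0 ≤ x^t_e ≤ n for all e ∈ E and t ≥ 1, where n ≥ 0, and let C := max_{e∈E} c_e. Then for every T ≥ 1, Σ_{t=1}^T Σ_{e∈E} τ^t_e (c_e − x^t_e) ≤ γ T |E| (C + n)² / 2. -/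
open Finset

/-
For a single edge the update is projected gradient descent on the toll, and
`τ_{t+1}² ≤ (τ_t - γ s_t)²` because projecting onto `[0, ∞)` does not increase the distance
to `0`. Expanding the square gives `2γ τ_t s_t ≤ τ_t² - τ_{t+1}² + γ² s_t²`; the first two
terms telescope to at most `τ_1² = 0`, and `s_t² ≤ (C + n)²` since `-n ≤ c_e - x^t_e ≤ C`.
-/

lemma sq_max_zero_le_sq (a : ℝ) : max a 0 ^ 2 ≤ a ^ 2 := by
  rcases le_total 0 a with h | h
  · rw [max_eq_left h]
  · simpa [max_eq_right h] using sq_nonneg a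

lemma two_mul_mul_add_sq_max_sub_le (γ τ s : ℝ) :
    2 * γ * (τ * s) + max (τ - γ * s) 0 ^ 2 ≤ τ ^ 2 + γ ^ 2 * s ^ 2 := by
  nlinarith [sq_max_zero_le_sq (τ - γ * s)]

section ProjectedStep

variable {γ B : ℝ} {τ s : ℕ → ℝ}

lemma two_mul_sum_mul_add_sq_le_of_projected (hτ1 : τ 1 = 0)
    (hrec : ∀ t, 1 ≤ t → τ (t + 1) = max (τ t - γ * s t) 0)
    (hs : ∀ t, 1 ≤ t → s t ^ 2 ≤ B) (T : ℕ) :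
    2 * γ * ∑ t ∈ Icc 1 T, τ t * s t + τ (T + 1) ^ 2 ≤ γ ^ 2 * T * B := by
  induction T with
  | zero => simp [hτ1]
  | succ T ih =>
    have hstep := two_mul_mul_add_sq_max_sub_le γ (τ (T + 1)) (s (T + 1))
    have hsB : γ ^ 2 * s (T + 1) ^ 2 ≤ γ ^ 2 * B :=
      mul_le_mul_of_nonneg_left (hs (T + 1) (by omega)) (sq_nonneg γ)
    rw [sum_Icc_succ_top (by omega), hrec (T + 1) (by omega)]
    push_cast
    linarith

lemma sum_mul_le_of_projected (hγ : 0 < γ) (hτ1 : τ 1 = 0)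
    (hrec : ∀ t, 1 ≤ t → τ (t + 1) = max (τ t - γ * s t) 0)
    (hs : ∀ t, 1 ≤ t → s t ^ 2 ≤ B) (T : ℕ) :
    ∑ t ∈ Icc 1 T, τ t * s t ≤ γ * T * B / 2 := by
  have h := two_mul_sum_mul_add_sq_le_of_projected hτ1 hrec hs T
  rw [le_div_iff₀ two_pos, ← mul_le_mul_iff_of_pos_left hγ]
  nlinarith [sq_nonneg (τ (T + 1))]

end ProjectedStep

theorem cumulative_toll_slack_bound_general
    {E : Type*} [Fintype E] [Nonempty E]
    (c : E → ℝ) (hc : ∀ e, 0 ≤ c e)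
    (γ : ℝ) (hγ : 0 < γ)
    (n : ℝ)
    (x τ : ℕ → E → ℝ)
    (hx : ∀ t, 1 ≤ t → ∀ e, 0 ≤ x t e ∧ x t e ≤ n)
    (hτ1 : ∀ e, τ 1 e = 0)
    (hrec : ∀ t, 1 ≤ t → ∀ e, τ (t + 1) e = max (τ t e - γ * (c e - x t e)) 0)
    (T : ℕ) :
    ∑ t ∈ Finset.Icc 1 T, ∑ e, τ t e * (c e - x t e) ≤
      γ * T * (Fintype.card E) *
        (Finset.univ.sup' Finset.univ_nonempty c + n) ^ 2 / 2 := by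
  set C := univ.sup' univ_nonempty c
  have hslack : ∀ t, 1 ≤ t → ∀ e, (c e - x t e) ^ 2 ≤ (C + n) ^ 2 := fun t ht e ↦ by
    have hcC : c e ≤ C := le_sup' c (mem_univ e)
    obtain ⟨hx0, hxn⟩ := hx t ht e
    exact sq_le_sq' (by linarith [hc e]) (by linarith)
  calc ∑ t ∈ Icc 1 T, ∑ e, τ t e * (c e - x t e)
      = ∑ e, ∑ t ∈ Icc 1 T, τ t e * (c e - x t e) := sum_comm
    _ ≤ ∑ _e : E, γ * T * (C + n) ^ 2 / 2 := sum_le_sum fun e _ ↦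
        sum_mul_le_of_projected hγ (hτ1 e) (fun t ht ↦ hrec t ht e)
          (fun t ht ↦ hslack t ht e) T
    _ = γ * T * (Fintype.card E) * (C + n) ^ 2 / 2 := by
        rw [sum_const, card_univ, nsmul_eq_mul]; ring

/-- **Upper bound on the cumulative toll–slack product** (Lemma 2): under the toll update
dynamics with `0 ≤ x^t_e ≤ n` and `c ≥ 0`, letting `C = max_e c_e`, for every `T ≥ 1`,
`Σ_{t=1}^T Σ_e τ^t_e (c_e − x^t_e) ≤ γ T |E| (C + n)² / 2`. -/
theorem cumulative_toll_slack_bound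
    {E : Type*} [Fintype E] [Nonempty E]
    (c : E → ℝ) (hc : ∀ e, 0 ≤ c e)
    (γ : ℝ) (hγ : 0 < γ)
    (n : ℝ) (hn : 0 ≤ n)
    (x τ : ℕ → E → ℝ)
    (hx : ∀ t, 1 ≤ t → ∀ e, 0 ≤ x t e ∧ x t e ≤ n)
    (hτ1 : ∀ e, τ 1 e = 0)
    (hrec : ∀ t, 1 ≤ t → ∀ e, τ (t + 1) e = max (τ t e - γ * (c e - x t e)) 0)
    (T : ℕ) (hT : 1 ≤ T) :
    ∑ t ∈ Finset.Icc 1 T, ∑ e, τ t e * (c e - x t e) ≤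
      γ * T * (Fintype.card E) *
        (Finset.univ.sup' Finset.univ_nonempty c + n) ^ 2 / 2 :=
  cumulative_toll_slack_bound_general c hc γ hγ n x τ hx hτ1 hrec T
end

section
/- Boundedness of tolls (Lemma 4): Under the toll update dynamics with step size γ satisfying 0 < γ ≤ 1, suppose c_e ≥ 0 for all e, 0 ≤ x^t_e ≤ n for all e and t (with n ≥ 0), and there is Λ ≥ 0 such that for every t and every edge e, τ^t_e > Λ implies x^t_e = 0. Then for every t ≥ 1 and every edge e, τ^t_e ≤ Λ + max_{e'∈E} c_{e'} + n. -/
open Finset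

/-- **Boundedness of tolls** (Lemma 4): under the toll update dynamics with step size
`0 < γ ≤ 1`, nonnegative capacities, flows bounded by `n ≥ 0`, and a threshold `Λ ≥ 0`
such that any edge with toll exceeding `Λ` carries zero flow, the tolls satisfy
`τ^t_e ≤ Λ + max_e c_e + n` for all `t ≥ 1` and all edges `e`. -/
theorem boundedness_of_tolls
    {E : Type*} [Fintype E] [Nonempty E]
    (c : E → ℝ) (hc : ∀ e, 0 ≤ c e)
    (γ : ℝ) (hγ : 0 < γ) (hγ1 : γ ≤ 1)
    (n : ℝ) (hn : 0 ≤ n)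
    (Λ : ℝ) (hΛ : 0 ≤ Λ)
    (x τ : ℕ → E → ℝ)
    (hx : ∀ t, 1 ≤ t → ∀ e, 0 ≤ x t e ∧ x t e ≤ n)
    (hτ1 : ∀ e, τ 1 e = 0)
    (hrec : ∀ t, 1 ≤ t → ∀ e, τ (t + 1) e = max (τ t e - γ * (c e - x t e)) 0)
    (hzero : ∀ t, 1 ≤ t → ∀ e, Λ < τ t e → x t e = 0) :
    ∀ t, 1 ≤ t → ∀ e, τ t e ≤ Λ + Finset.univ.sup' Finset.univ_nonempty c + n := by
  set M := Finset.univ.sup' Finset.univ_nonempty c with hM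
  have hM0 : 0 ≤ M := by
    obtain ⟨e⟩ := ‹Nonempty E›
    exact le_trans (hc e) (Finset.le_sup' c (Finset.mem_univ e))
  intro t ht
  induction t, ht using Nat.le_induction with
  | base => intro e; rw [hτ1]; positivity
  | succ t ht ih =>
    intro e
    rw [hrec t ht e]
    rcases le_or_gt (τ t e) Λ with h | h
    · have hx1 := (hx t ht e).1
      have hx2 := (hx t ht e).2
      have : τ t e - γ * (c e - x t e) ≤ Λ + M + n := by
        have hγx : γ * x t e ≤ n := by
          calc γ * x t e ≤ 1 * x t e := by nlinarith
          _ ≤ n := by linarith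
        nlinarith [hc e]
      have : max (τ t e - γ * (c e - x t e)) 0 ≤ Λ + M + n := by
        apply max_le this; positivity
      exact this
    · have hx0 := hzero t ht e h
      have ihb := ih e
      apply max_le _ (by positivity)
      rw [hx0]
      nlinarith [hc e]
end

section
/- Square root regret of the online tolling algorithm (Theorem 2, regret part, pathwise form): Fix T ≥ 1 and run the toll update dynamics with step size γ = 1/√T. Suppose that for each period t = 1,...,T there is a routing instance on the fixed edge set E, capacities c (c_e ≥ 0) and latencies l (l_e ≥ 0), with a finite user set U (n := |U|), period-t values of time v^t_u ≥ 0, period-t nonempty finite path sets 𝒫^t_u, and outside-option costs λ_u ≥ 0; that a^t is an equilibrium assignment under the toll τ^t for the period-t instance; and that x^t is the edge flow of a^t. Let U_t denote the total system cost of a^t and let U_t* denote the minimum total system cost over all capacity-feasible assignments for the period-t instance. Then Σ_{t=1}^T (U_t − U_t*) ≤ (|E| (n + max_{e∈E} c_e)² / 2) · √T. -/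
/-!
Write `x^t` for the flow and `g^t_e = c_e - x^t_e` for the capacity slack. Since `a^t` is an
equilibrium under the nonnegative toll `τ^t`, comparing it with a capacity-feasible optimum `b`
user by user and summing gives `U_t - U_t* ≤ ∑_e τ^t_e g^t_e` (the toll paid on `b` is at most
`∑_e τ^t_e c_e`). The toll update is projected gradient descent on these linear losses, so
`2γ τ^t_e g^t_e ≤ (τ^t_e)² - (τ^{t+1}_e)² + γ² (g^t_e)²`; the squares telescope from `τ^1 = 0`,
and `|g^t_e| ≤ n + max c`, so the regret is at most
`T |E| γ (n + max c)² / 2 = |E| (n + max c)² √T / 2`.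
-/

open Finset

section ProjectedDescent

variable {E : Type*} {τ g : ℕ → E → ℝ} {γ : ℝ}

lemma two_mul_mul_le_sq_sub_sq_max_sub (x γ y : ℝ) :
    2 * γ * (x * y) ≤ x ^ 2 - max (x - γ * y) 0 ^ 2 + γ ^ 2 * y ^ 2 := by
  have hproj : max (x - γ * y) 0 ^ 2 ≤ (x - γ * y) ^ 2 := by
    rw [← sq_abs (x - γ * y)]
    exact pow_le_pow_left₀ (le_max_right _ _) (max_le (le_abs_self _) (abs_nonneg _)) 2
  nlinarith [hproj]

lemma nonneg_of_eq_max_sub (hτ1 : ∀ e, τ 1 e = 0)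
    (hrec : ∀ t, 1 ≤ t → ∀ e, τ (t + 1) e = max (τ t e - γ * g t e) 0) {t : ℕ} (ht : 1 ≤ t)
    (e : E) : 0 ≤ τ t e := by
  induction t, ht using Nat.le_induction with
  | base => exact (hτ1 e).ge
  | succ t ht _ => exact (hrec t ht e).symm ▸ le_max_right _ _

theorem sum_sum_mul_le_of_eq_max_sub [Fintype E] {T : ℕ} (hT : 1 ≤ T) (hγ : 0 < γ) {B : ℝ}
    (hg : ∀ t ∈ Icc 1 T, ∀ e, |g t e| ≤ B) (hτ1 : ∀ e, τ 1 e = 0)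
    (hrec : ∀ t, 1 ≤ t → ∀ e, τ (t + 1) e = max (τ t e - γ * g t e) 0) :
    ∑ t ∈ Icc 1 T, ∑ e, τ t e * g t e ≤ T * Fintype.card E * γ * B ^ 2 / 2 := by
  have hstep : ∀ t ∈ Icc 1 T, 2 * γ * ∑ e, τ t e * g t e ≤
      ∑ e, (τ t e ^ 2 - τ (t + 1) e ^ 2) + Fintype.card E * (γ ^ 2 * B ^ 2) := by
    intro t ht
    rw [mul_sum, ← nsmul_eq_mul, ← card_univ, ← sum_const, ← sum_add_distrib]
    refine sum_le_sum fun e _ => ?_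
    have hgB : g t e ^ 2 ≤ B ^ 2 := sq_le_sq' (abs_le.mp (hg t ht e)).1 (abs_le.mp (hg t ht e)).2
    rw [hrec t (mem_Icc.mp ht).1 e]
    nlinarith [two_mul_mul_le_sq_sub_sq_max_sub (τ t e) γ (g t e), sq_nonneg γ]
  have htelescope : ∑ t ∈ Icc 1 T, ∑ e, (τ t e ^ 2 - τ (t + 1) e ^ 2) ≤ 0 := by
    rw [sum_comm]
    refine sum_nonpos fun e _ => ?_
    calc ∑ t ∈ Icc 1 T, (τ t e ^ 2 - τ (t + 1) e ^ 2)
        = -∑ t ∈ Icc 1 T, (τ (t + 1) e ^ 2 - τ t e ^ 2) := by simp only [← sum_neg_distrib, neg_sub]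
      _ = -(τ (T + 1) e ^ 2 - τ 1 e ^ 2) := by rw [sum_Icc_sub hT fun t => τ t e ^ 2]
      _ ≤ 0 := by simp [hτ1, sq_nonneg]
  have hsum := sum_le_sum hstep
  rw [← mul_sum, sum_add_distrib, sum_const, Nat.card_Icc, Nat.add_sub_cancel, nsmul_eq_mul]
    at hsum
  rw [le_div_iff₀ two_pos]
  refine le_of_mul_le_mul_left ?_ hγ
  linarith

end ProjectedDescent

section Routing

variable {E U : Type*}

noncomputable def tollPaid (τ : E → ℝ) : Option (Finset E) → ℝ
  | some P => ∑ e ∈ P, τ e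
  | none => 0

lemma userCost_eq_sysCost_add_tollPaid (l τ : E → ℝ) (vu lamu : ℝ) (o : Option (Finset E)) :
    userCost l τ vu lamu o = sysCost l vu lamu o + tollPaid τ o := by
  cases o <;> simp [userCost, sysCost, tollPaid]

lemma userCost_le_of_eq_min {l τ : E → ℝ} {vu lamu : ℝ} {Ps : Finset (Finset E)}
    (hPs : Ps.Nonempty) {o : Option (Finset E)}
    (ho : userCost l τ vu lamu o =
      min lamu (Ps.inf' hPs fun P => vu * ∑ e ∈ P, l e + ∑ e ∈ P, τ e))
    {o' : Option (Finset E)} (ho' : ∀ P, o' = some P → P ∈ Ps) :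
    userCost l τ vu lamu o ≤ userCost l τ vu lamu o' := by
  rw [ho]
  cases o' with
  | none => exact min_le_left _ _
  | some P => exact (min_le_right _ _).trans (inf'_le _ (ho' P rfl))

variable [Fintype U] [DecidableEq E]

lemma edgeFlow_nonneg (b : U → Option (Finset E)) (e : E) : 0 ≤ edgeFlow b e :=
  sum_nonneg fun u _ => by split <;> [split_ifs <;> norm_num; norm_num]

lemma edgeFlow_le_card (b : U → Option (Finset E)) (e : E) :
    edgeFlow b e ≤ Fintype.card U := by
  calc edgeFlow b e ≤ ∑ _u : U, (1 : ℝ) :=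
        sum_le_sum fun u _ => by split <;> [split_ifs <;> norm_num; norm_num]
    _ = Fintype.card U := by simp

lemma sum_tollPaid_eq_sum_mul_edgeFlow [Fintype E] (τ : E → ℝ) (b : U → Option (Finset E)) :
    ∑ u, tollPaid τ (b u) = ∑ e, τ e * edgeFlow b e := by
  simp_rw [edgeFlow, mul_sum]
  rw [sum_comm]
  refine sum_congr rfl fun u _ => ?_
  cases b u <;> simp [tollPaid, mul_ite, sum_ite_mem]

lemma abs_sub_edgeFlow_le {c M : ℝ} (hc : 0 ≤ c) (hcM : c ≤ M) (b : U → Option (Finset E))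
    (e : E) : |c - edgeFlow b e| ≤ Fintype.card U + M :=
  abs_le.mpr ⟨by linarith [edgeFlow_le_card b e], by linarith [edgeFlow_nonneg b e,
    (Nat.cast_nonneg _ : (0 : ℝ) ≤ Fintype.card U)]⟩

lemma totalCost_sub_le_sum_mul_sub_edgeFlow [Fintype E] {l c τ : E → ℝ} (hτ : ∀ e, 0 ≤ τ e)
    {v lam : U → ℝ} {a b : U → Option (Finset E)}
    (hab : ∀ u, userCost l τ (v u) (lam u) (a u) ≤ userCost l τ (v u) (lam u) (b u))
    (hb : ∀ e, edgeFlow b e ≤ c e) :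
    totalCost l v lam a - totalCost l v lam b ≤ ∑ e, τ e * (c e - edgeFlow a e) := by
  have hexpand : ∀ b' : U → Option (Finset E), ∑ u, userCost l τ (v u) (lam u) (b' u) =
      totalCost l v lam b' + ∑ e, τ e * edgeFlow b' e := fun b' => by
    simp only [userCost_eq_sysCost_add_tollPaid, sum_add_distrib,
      sum_tollPaid_eq_sum_mul_edgeFlow, totalCost]
  have hequilibrium := sum_le_sum fun u (_ : u ∈ univ) => hab u
  rw [hexpand, hexpand] at hequilibrium
  have hcapacity : ∑ e, τ e * edgeFlow b e ≤ ∑ e, τ e * c e :=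
    sum_le_sum fun e _ => mul_le_mul_of_nonneg_left (hb e) (hτ e)
  simp only [mul_sub, sum_sub_distrib]
  linarith

end Routing

theorem online_tolling_sqrt_regret_general
    {E U : Type*} [Fintype E] [Nonempty E] [DecidableEq E] [Fintype U]
    (T : ℕ) (hT : 1 ≤ T)
    (l c : E → ℝ) (hc : ∀ e, 0 ≤ c e)
    (v : ℕ → U → ℝ)
    (lam : U → ℝ)
    (paths : ℕ → U → Finset (Finset E)) (hpaths : ∀ t u, (paths t u).Nonempty)
    (a : ℕ → U → Option (Finset E))
    (τ : ℕ → E → ℝ)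
    (hτ1 : ∀ e, τ 1 e = 0)
    (hrec : ∀ t, 1 ≤ t → ∀ e,
      τ (t + 1) e = max (τ t e - (1 / Real.sqrt T) * (c e - edgeFlow (a t) e)) 0)
    (heq : ∀ t, 1 ≤ t → ∀ u, userCost l (τ t) (v t u) (lam u) (a t u) =
      min (lam u)
        ((paths t u).inf' (hpaths t u) fun P => v t u * ∑ e ∈ P, l e + ∑ e ∈ P, τ t e))
    (Ustar : ℕ → ℝ)
    (hUstar : ∀ t ∈ Finset.Icc 1 T,
      (∃ b : U → Option (Finset E), (∀ u P, b u = some P → P ∈ paths t u) ∧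
          (∀ e, edgeFlow b e ≤ c e) ∧ totalCost l (v t) lam b = Ustar t) ∧
        ∀ b : U → Option (Finset E), (∀ u P, b u = some P → P ∈ paths t u) →
          (∀ e, edgeFlow b e ≤ c e) → Ustar t ≤ totalCost l (v t) lam b) :
    ∑ t ∈ Finset.Icc 1 T, (totalCost l (v t) lam (a t) - Ustar t) ≤
      (Fintype.card E) *
          ((Fintype.card U) + Finset.univ.sup' Finset.univ_nonempty c) ^ 2 / 2 *
        Real.sqrt T := by
  have hγ : 0 < 1 / Real.sqrt T := one_div_pos.mpr (Real.sqrt_pos.mpr (by exact_mod_cast hT))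
  have hTγ : (T : ℝ) * (1 / Real.sqrt T) = Real.sqrt T := by rw [mul_one_div, Real.div_sqrt]
  calc ∑ t ∈ Icc 1 T, (totalCost l (v t) lam (a t) - Ustar t)
      ≤ ∑ t ∈ Icc 1 T, ∑ e, τ t e * (c e - edgeFlow (a t) e) := sum_le_sum fun t ht => by
        have ht1 := (mem_Icc.mp ht).1
        obtain ⟨⟨b, hbpaths, hbcapacity, hbcost⟩, -⟩ := hUstar t ht
        rw [← hbcost]
        exact totalCost_sub_le_sum_mul_sub_edgeFlow (nonneg_of_eq_max_sub hτ1 hrec ht1)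
          (fun u => userCost_le_of_eq_min _ (heq t ht1 u) (hbpaths u)) hbcapacity
    _ ≤ T * Fintype.card E * (1 / Real.sqrt T) *
          (Fintype.card U + univ.sup' univ_nonempty c) ^ 2 / 2 :=
        sum_sum_mul_le_of_eq_max_sub hT hγ
          (fun t _ e => abs_sub_edgeFlow_le (hc e) (le_sup' c (mem_univ e)) _ _) hτ1 hrec
    _ = _ := by
        linear_combination
          (Fintype.card E * (Fintype.card U + univ.sup' univ_nonempty c) ^ 2 / 2 : ℝ) * hTγ

/-- **Square root regret of the online tolling algorithm** (Theorem 2, regret part,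
pathwise form): running the toll update dynamics with step size `γ = 1/√T`, where at each
period `t = 1,…,T` the assignment `a^t` is an equilibrium for the period-`t` instance under
the toll `τ^t`, the cumulative regret relative to the per-period optimal capacity-feasible
costs `U_t*` satisfies `Σ_{t=1}^T (U_t − U_t*) ≤ (|E| (n + max_e c_e)²/2) √T`. -/
theorem online_tolling_sqrt_regret
    {E U : Type*} [Fintype E] [Nonempty E] [DecidableEq E] [Fintype U]
    (T : ℕ) (hT : 1 ≤ T)
    (l c : E → ℝ) (hl : ∀ e, 0 ≤ l e) (hc : ∀ e, 0 ≤ c e)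
    (v : ℕ → U → ℝ) (hv : ∀ t u, 0 ≤ v t u)
    (lam : U → ℝ) (hlam : ∀ u, 0 ≤ lam u)
    (paths : ℕ → U → Finset (Finset E)) (hpaths : ∀ t u, (paths t u).Nonempty)
    (a : ℕ → U → Option (Finset E))
    (ha : ∀ t, 1 ≤ t → ∀ u P, a t u = some P → P ∈ paths t u)
    (τ : ℕ → E → ℝ)
    (hτ1 : ∀ e, τ 1 e = 0)
    (hrec : ∀ t, 1 ≤ t → ∀ e,
      τ (t + 1) e = max (τ t e - (1 / Real.sqrt T) * (c e - edgeFlow (a t) e)) 0)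
    (heq : ∀ t, 1 ≤ t → ∀ u, userCost l (τ t) (v t u) (lam u) (a t u) =
      min (lam u)
        ((paths t u).inf' (hpaths t u) fun P => v t u * ∑ e ∈ P, l e + ∑ e ∈ P, τ t e))
    (Ustar : ℕ → ℝ)
    (hUstar : ∀ t ∈ Finset.Icc 1 T,
      (∃ b : U → Option (Finset E), (∀ u P, b u = some P → P ∈ paths t u) ∧
          (∀ e, edgeFlow b e ≤ c e) ∧ totalCost l (v t) lam b = Ustar t) ∧
        ∀ b : U → Option (Finset E), (∀ u P, b u = some P → P ∈ paths t u) →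
          (∀ e, edgeFlow b e ≤ c e) → Ustar t ≤ totalCost l (v t) lam b) :
    ∑ t ∈ Finset.Icc 1 T, (totalCost l (v t) lam (a t) - Ustar t) ≤
      (Fintype.card E) *
          ((Fintype.card U) + Finset.univ.sup' Finset.univ_nonempty c) ^ 2 / 2 *
        Real.sqrt T :=
  online_tolling_sqrt_regret_general T hT l c hc v lam paths hpaths a τ hτ1 hrec heq Ustar hUstar
end

section
/- Square root capacity violation of the online tolling algorithm (Theorem 2, violation part, pathwise form): Fix T ≥ 1 and run the toll update dynamics with step size γ = 1/√T. Suppose that for each period t = 1,...,T there is a routing instance on the fixed edge set E, capacities c (c_e ≥ 0) and latencies l (l_e ≥ 0), with a finite user set U (n := |U|), period-t values of time v^t_u ≥ 0, period-t nonempty finite path sets 𝒫^t_u, and outside-option costs λ_u ≥ 0; that a^t is an equilibrium assignment under the toll τ^t for the period-t instance; and that x^t is the edge flow of a^t. Then ‖( Σ_{t=1}^T (x^t − c) )₊‖₂ ≤ |E| (max_{u∈U} λ_u + max_{e∈E} c_e + n) · √T. -/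
open Finset

/-- **Square root capacity violation of the online tolling algorithm** (Theorem 2,
violation part, pathwise form): running the toll update dynamics with step size
`γ = 1/√T`, where at each period `t = 1,…,T` the assignment `a^t` is an equilibrium for
the period-`t` instance under the toll `τ^t` with edge flow `x^t`, the cumulative
capacity violation satisfies
`‖(Σ_{t=1}^T (x^t − c))₊‖₂ ≤ |E| (max_u λ_u + max_e c_e + n) √T`. -/
theorem online_tolling_sqrt_violation
    {E U : Type*} [Fintype E] [Nonempty E] [DecidableEq E] [Fintype U] [Nonempty U]
    (T : ℕ) (hT : 1 ≤ T)
    (l c : E → ℝ) (hl : ∀ e, 0 ≤ l e) (hc : ∀ e, 0 ≤ c e)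
    (v : ℕ → U → ℝ) (hv : ∀ t u, 0 ≤ v t u)
    (lam : U → ℝ) (hlam : ∀ u, 0 ≤ lam u)
    (paths : ℕ → U → Finset (Finset E)) (hpaths : ∀ t u, (paths t u).Nonempty)
    (a : ℕ → U → Option (Finset E))
    (ha : ∀ t, 1 ≤ t → ∀ u P, a t u = some P → P ∈ paths t u)
    (τ : ℕ → E → ℝ)
    (hτ1 : ∀ e, τ 1 e = 0)
    (hrec : ∀ t, 1 ≤ t → ∀ e,
      τ (t + 1) e = max (τ t e - (1 / Real.sqrt T) * (c e - edgeFlow (a t) e)) 0)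
    (heq : ∀ t, 1 ≤ t → ∀ u, userCost l (τ t) (v t u) (lam u) (a t u) =
      min (lam u)
        ((paths t u).inf' (hpaths t u) fun P => v t u * ∑ e ∈ P, l e + ∑ e ∈ P, τ t e)) :
    Real.sqrt (∑ e, max (∑ t ∈ Finset.Icc 1 T, (edgeFlow (a t) e - c e)) 0 ^ 2) ≤
      (Fintype.card E) *
          (Finset.univ.sup' Finset.univ_nonempty lam +
            Finset.univ.sup' Finset.univ_nonempty c + (Fintype.card U)) *
        Real.sqrt T := by
  classical
  set γ : ℝ := 1 / Real.sqrt T with hγdef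
  have hT1 : (1:ℝ) ≤ (T:ℝ) := by exact_mod_cast hT
  have hsT : (1:ℝ) ≤ Real.sqrt T := by
    rw [show (1:ℝ) = Real.sqrt 1 by simp]
    exact Real.sqrt_le_sqrt hT1
  have hsT0 : (0:ℝ) < Real.sqrt T := lt_of_lt_of_le one_pos hsT
  have hγpos : 0 < γ := by rw [hγdef]; positivity
  set L : ℝ := Finset.univ.sup' Finset.univ_nonempty lam with hLdef
  set C : ℝ := Finset.univ.sup' Finset.univ_nonempty c with hCdef
  set n : ℝ := (Fintype.card U : ℝ) with hndef
  have hLu : ∀ u, lam u ≤ L := fun u => Finset.le_sup' lam (Finset.mem_univ u)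
  have hL0 : 0 ≤ L := le_trans (hlam (Classical.arbitrary U)) (hLu _)
  have hCe : ∀ e, c e ≤ C := fun e => Finset.le_sup' c (Finset.mem_univ e)
  have hC0 : 0 ≤ C := le_trans (hc (Classical.arbitrary E)) (hCe _)
  have hn0 : (0:ℝ) ≤ n := Nat.cast_nonneg _
  -- tolls are nonnegative
  have hτ0 : ∀ t, 1 ≤ t → ∀ e, 0 ≤ τ t e := by
    intro t ht
    induction t, ht using Nat.le_induction with
    | base => intro e; rw [hτ1]
    | succ t ht ih => intro e; rw [hrec t ht e]; exact le_max_right _ _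
  -- flow bounds
  have hflow0 : ∀ t e, 0 ≤ edgeFlow (a t) e := by
    intro t e
    apply Finset.sum_nonneg
    intro u _
    rcases h : a t u with _ | P <;> simp [h]
    split <;> norm_num
  have hflown : ∀ t e, edgeFlow (a t) e ≤ n := by
    intro t e
    have : edgeFlow (a t) e ≤ ∑ _u : U, (1:ℝ) := by
      apply Finset.sum_le_sum
      intro u _
      rcases h : a t u with _ | P <;> simp [h]
      split <;> norm_num
    simpa using this
  -- a large toll forces zero flow
  have hzero : ∀ t, 1 ≤ t → ∀ e, L < τ t e → edgeFlow (a t) e = 0 := by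
    intro t ht e hlt
    apply Finset.sum_eq_zero
    intro u _
    rcases h : a t u with _ | P
    · simp [h]
    · simp only [h]
      by_cases hP : e ∈ P
      · exfalso
        have h1 := heq t ht u
        rw [h] at h1
        have h2 : userCost l (τ t) (v t u) (lam u) (some P) ≤ lam u := by
          rw [h1]; exact min_le_left _ _
        have h3 : τ t e ≤ ∑ e' ∈ P, τ t e' :=
          Finset.single_le_sum (fun e' _ => hτ0 t ht e') hP
        have h4 : 0 ≤ v t u * ∑ e' ∈ P, l e' :=
          mul_nonneg (hv t u) (Finset.sum_nonneg fun e' _ => hl e')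
        have h5 : userCost l (τ t) (v t u) (lam u) (some P)
            = v t u * ∑ e' ∈ P, l e' + ∑ e' ∈ P, τ t e' := rfl
        rw [h5] at h2
        have h6 := hLu u
        linarith
      · simp [hP]
  -- toll upper bound
  have hbound : ∀ t, 1 ≤ t → ∀ e, τ t e ≤ L + γ * n := by
    have hγn : 0 ≤ γ * n := mul_nonneg hγpos.le hn0
    intro t ht
    induction t, ht using Nat.le_induction with
    | base => intro e; rw [hτ1]; linarith
    | succ t ht ih =>
      intro e
      rw [hrec t ht e]
      apply max_le _ (by linarith)
      by_cases hcase : L < τ t e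
      · have hz := hzero t ht e hcase
        rw [hz]
        have := ih e
        nlinarith [mul_nonneg hγpos.le (hc e)]
      · push_neg at hcase
        nlinarith [mul_nonneg hγpos.le (hc e),
          mul_le_mul_of_nonneg_left (hflown t e) hγpos.le]
  -- telescoping
  have htel : ∀ e, γ * ∑ t ∈ Finset.Icc 1 T, (edgeFlow (a t) e - c e) ≤ τ (T+1) e := by
    intro e
    have key : ∀ m : ℕ, γ * ∑ t ∈ Finset.Icc 1 m, (edgeFlow (a t) e - c e) ≤ τ (m+1) e := by
      intro m
      induction m with
      | zero => simp [hτ1]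
      | succ m ih =>
        rw [Finset.sum_Icc_succ_top (Nat.le_add_left 1 m)]
        rw [hrec (m+1) (Nat.le_add_left 1 m) e]
        have hring : γ * (∑ t ∈ Finset.Icc 1 m, (edgeFlow (a t) e - c e)
              + (edgeFlow (a (m+1)) e - c e))
            = γ * ∑ t ∈ Finset.Icc 1 m, (edgeFlow (a t) e - c e)
              - γ * (c e - edgeFlow (a (m+1)) e) := by ring
        rw [hring]
        refine le_trans ?_ (le_max_left _ _)
        linarith
    exact key T
  -- per-edge bound on the positive violation
  set M : ℝ := (L + C + n) * Real.sqrt T with hMdef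
  have hM0 : 0 ≤ M := mul_nonneg (by linarith) hsT0.le
  have hMe : ∀ e, max (∑ t ∈ Finset.Icc 1 T, (edgeFlow (a t) e - c e)) 0 ≤ M := by
    intro e
    set S := ∑ t ∈ Finset.Icc 1 T, (edgeFlow (a t) e - c e) with hSdef
    have h1 : γ * S ≤ L + γ * n := le_trans (htel e) (hbound (T+1) (Nat.le_add_left 1 T) e)
    have h2 : γ * Real.sqrt T = 1 := by
      rw [hγdef]; field_simp
    have h3 := mul_le_mul_of_nonneg_right h1 hsT0.le
    have h4 : γ * S * Real.sqrt T = S := by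
      rw [mul_comm γ S, mul_assoc, h2, mul_one]
    have h5 : (L + γ * n) * Real.sqrt T = L * Real.sqrt T + n := by
      rw [add_mul, mul_comm γ n, mul_assoc, h2, mul_one]
    have hS : S ≤ L * Real.sqrt T + n := by rw [h4, h5] at h3; exact h3
    apply max_le _ hM0
    have : L * Real.sqrt T + n ≤ M := by
      rw [hMdef]
      nlinarith [mul_nonneg hC0 hsT0.le, mul_nonneg hn0 (by linarith : (0:ℝ) ≤ Real.sqrt T - 1)]
    linarith
  -- assemble
  have hE1 : (1:ℝ) ≤ (Fintype.card E : ℝ) := by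
    exact_mod_cast Fintype.card_pos
  have hsum : ∑ e, max (∑ t ∈ Finset.Icc 1 T, (edgeFlow (a t) e - c e)) 0 ^ 2
      ≤ (Fintype.card E : ℝ) * M ^ 2 := by
    calc ∑ e, max (∑ t ∈ Finset.Icc 1 T, (edgeFlow (a t) e - c e)) 0 ^ 2
        ≤ ∑ _e : E, M ^ 2 :=
          Finset.sum_le_sum (fun e _ => pow_le_pow_left₀ (le_max_right _ _) (hMe e) 2)
      _ = (Fintype.card E : ℝ) * M ^ 2 := by
          rw [Finset.sum_const, Finset.card_univ, nsmul_eq_mul]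
  have hstep := Real.sqrt_le_sqrt hsum
  have hrw : Real.sqrt ((Fintype.card E : ℝ) * M ^ 2)
      = Real.sqrt (Fintype.card E : ℝ) * M := by
    rw [Real.sqrt_mul (by linarith) (M ^ 2), Real.sqrt_sq hM0]
  have hcard : Real.sqrt (Fintype.card E : ℝ) ≤ (Fintype.card E : ℝ) := by
    have : Real.sqrt (Fintype.card E : ℝ) ≤ Real.sqrt ((Fintype.card E : ℝ) ^ 2) := by
      apply Real.sqrt_le_sqrt; nlinarith
    rwa [Real.sqrt_sq (by linarith)] at this
  calc Real.sqrt (∑ e, max (∑ t ∈ Finset.Icc 1 T, (edgeFlow (a t) e - c e)) 0 ^ 2)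
      ≤ Real.sqrt (Fintype.card E : ℝ) * M := by rw [← hrw]; exact hstep
    _ ≤ (Fintype.card E : ℝ) * M := mul_le_mul_of_nonneg_right hcard hM0
    _ = (Fintype.card E : ℝ) * (L + C + n) * Real.sqrt T := by rw [hMdef, mul_assoc]
end

section
/- Optimality of the greedy assignment in parallel networks: In a sorted parallel instance, the greedy assignment σ* minimizes the cost among all assignments; that is, for every assignment σ (every map from users to edges with |σ^{-1}(j)| ≤ c_j for each edge j), Σ_{u=1}^n v_u l_{σ*(u)} ≤ Σ_{u=1}^n v_u l_{σ(u)}. -/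
/-!
Two summations by parts. Writing `v` as a nonnegative combination of the indicators of the
prefixes `{1, …, k}` reduces the claim to `∑_{u ≤ k} l (σ* u) ≤ ∑_{u ≤ k} l (σ u)` for every `k`.
Writing `l` in the same way through the indicators of `{j ≤ t}` reduces this in turn to
`#{u ≤ k | σ u ≤ t} ≤ min k (c 1 + ⋯ + c t) ≤ #{u ≤ k | σ* u ≤ t}`: the capacities bound the
left side, and the greedy assignment puts the first `c 1 + ⋯ + c t` users on the first `t` edges.
-/

open Finset

lemma eq_add_sum_Ico_ite (w : ℕ → ℝ) {i N : ℕ} (hi : i ∈ Icc 1 N) :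
    w i = w N + ∑ j ∈ Ico 1 N, if i ≤ j then w j - w (j + 1) else 0 := by
  rw [← sum_filter, Ico_filter_le, max_eq_right (mem_Icc.1 hi).1, ← neg_inj]
  simp only [neg_add, ← sum_neg_distrib, neg_sub, sum_Ico_sub (fun j => w j) (mem_Icc.1 hi).2]
  ring

lemma sum_comp_mul_by_parts {ι : Type*} (s : Finset ι) (τ : ι → ℕ) {N : ℕ}
    (hτ : ∀ u ∈ s, τ u ∈ Icc 1 N) (w : ℕ → ℝ) (f : ι → ℝ) :
    ∑ u ∈ s, w (τ u) * f u =
      w N * ∑ u ∈ s, f u + ∑ j ∈ Ico 1 N, (w j - w (j + 1)) * ∑ u ∈ s with τ u ≤ j, f u := by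
  calc ∑ u ∈ s, w (τ u) * f u
      = ∑ u ∈ s, (w N + ∑ j ∈ Ico 1 N, if τ u ≤ j then w j - w (j + 1) else 0) * f u :=
        sum_congr rfl fun u hu => by rw [← eq_add_sum_Ico_ite w (hτ u hu)]
    _ = _ := by
      simp only [add_mul, sum_add_distrib, mul_sum, sum_mul, ite_mul, zero_mul, mul_ite, mul_zero,
        sum_filter]
      rw [sum_comm]

lemma succ_mem_Icc_of_mem_Ico {j N : ℕ} (hj : j ∈ Ico 1 N) : j + 1 ∈ Icc 1 N := by
  rw [mem_Ico] at hj
  exact mem_Icc.2 ⟨by omega, hj.2⟩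

lemma sum_mul_le_sum_mul_of_antitoneOn {N : ℕ} {w f g : ℕ → ℝ} (hw : AntitoneOn w (Icc 1 N))
    (hwN : 0 ≤ w N) (hfg : ∀ t ∈ Icc 1 N, ∑ u ∈ Icc 1 t, f u ≤ ∑ u ∈ Icc 1 t, g u) :
    ∑ u ∈ Icc 1 N, w u * f u ≤ ∑ u ∈ Icc 1 N, w u * g u := by
  rcases Nat.eq_zero_or_pos N with rfl | hN
  · simp
  have hprefix : ∀ j ∈ Ico 1 N, {u ∈ Icc 1 N | u ≤ j} = Icc 1 j := fun j hj => by
    ext u; simp only [mem_filter, mem_Icc, mem_Ico] at hj ⊢; omega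
  have by_parts := sum_comp_mul_by_parts (Icc 1 N) id (fun _ => id) w
  simp only [id] at by_parts
  rw [by_parts f, by_parts g]
  refine add_le_add (mul_le_mul_of_nonneg_left (hfg N (mem_Icc.2 ⟨hN, le_rfl⟩)) hwN)
    (sum_le_sum fun j hj => mul_le_mul_of_nonneg_left ?_ ?_)
  · rw [hprefix j hj]
    exact hfg j (Ico_subset_Icc_self hj)
  · exact sub_nonneg.2 (hw (Ico_subset_Icc_self hj) (succ_mem_Icc_of_mem_Ico hj) j.le_succ)

lemma sum_comp_le_sum_comp_of_card_filter_le {ι : Type*} {s : Finset ι} {m : ℕ} {l : ℕ → ℝ}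
    (hl : MonotoneOn l (Icc 1 m)) {τ τ' : ι → ℕ} (hτ : ∀ u ∈ s, τ u ∈ Icc 1 m)
    (hτ' : ∀ u ∈ s, τ' u ∈ Icc 1 m)
    (hcard : ∀ t ∈ Icc 1 m, #{u ∈ s | τ u ≤ t} ≤ #{u ∈ s | τ' u ≤ t}) :
    ∑ u ∈ s, l (τ' u) ≤ ∑ u ∈ s, l (τ u) := by
  have by_parts : ∀ σ : ι → ℕ, (∀ u ∈ s, σ u ∈ Icc 1 m) → ∑ u ∈ s, l (σ u) =
      l m * #s + ∑ j ∈ Ico 1 m, (l j - l (j + 1)) * #{u ∈ s | σ u ≤ j} := fun σ hσ => by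
    simpa using sum_comp_mul_by_parts s σ hσ l 1
  rw [by_parts τ hτ, by_parts τ' hτ']
  refine add_le_add le_rfl (sum_le_sum fun j hj => ?_)
  refine mul_le_mul_of_nonpos_left (by exact_mod_cast hcard j (Ico_subset_Icc_self hj)) ?_
  exact sub_nonpos.2 (hl (Ico_subset_Icc_self hj) (succ_mem_Icc_of_mem_Ico hj) j.le_succ)

lemma card_filter_le_le_sum_of_card_fiber_le {ι : Type*} {s : Finset ι} {σ : ι → ℕ}
    {c : ℕ → ℕ} {t : ℕ} (hσ : ∀ u ∈ s, 1 ≤ σ u)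
    (hcap : ∀ j ∈ Icc 1 t, #{u ∈ s | σ u = j} ≤ c j) :
    #{u ∈ s | σ u ≤ t} ≤ ∑ j ∈ Icc 1 t, c j := by
  have hmaps : ∀ u ∈ {u ∈ s | σ u ≤ t}, σ u ∈ Icc 1 t := fun u hu => by
    rw [mem_filter] at hu; exact mem_Icc.2 ⟨hσ u hu.1, hu.2⟩
  rw [card_eq_sum_card_fiberwise hmaps]
  refine sum_le_sum fun j hj => (card_le_card ?_).trans (hcap j hj)
  exact filter_subset_filter _ (filter_subset _ s)

lemma le_of_sum_Ico_lt_of_le_sum_Icc {c : ℕ → ℕ} {i t u : ℕ} (hi : ∑ j ∈ Ico 1 i, c j < u)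
    (ht : u ≤ ∑ j ∈ Icc 1 t, c j) : i ≤ t := by
  by_contra! hti
  have hsub : Icc 1 t ⊆ Ico 1 i := fun x hx => by
    simp only [mem_Icc, mem_Ico] at hx ⊢; omega
  have := sum_le_sum_of_subset (f := c) hsub
  omega

lemma min_le_card_filter_le_of_sum_Ico_lt {σ : ℕ → ℕ} {c : ℕ → ℕ} {k t : ℕ}
    (hσ : ∀ u ∈ Icc 1 k, ∑ j ∈ Ico 1 (σ u), c j < u) :
    min k (∑ j ∈ Icc 1 t, c j) ≤ #{u ∈ Icc 1 k | σ u ≤ t} := by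
  calc min k (∑ j ∈ Icc 1 t, c j) = #(Icc 1 (min k (∑ j ∈ Icc 1 t, c j))) := by simp
    _ ≤ #{u ∈ Icc 1 k | σ u ≤ t} := card_le_card fun u hu => by
      obtain ⟨hu1, huk, hut⟩ : 1 ≤ u ∧ u ≤ k ∧ u ≤ ∑ j ∈ Icc 1 t, c j := by simpa using hu
      have huk' : u ∈ Icc 1 k := mem_Icc.2 ⟨hu1, huk⟩
      exact mem_filter.2 ⟨huk', le_of_sum_Ico_lt_of_le_sum_Icc (hσ u huk') hut⟩

lemma sum_comp_le_sum_comp_of_greedy {k m : ℕ} {l : ℕ → ℝ} {c : ℕ → ℕ} {σstar σ : ℕ → ℕ}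
    (hl : MonotoneOn l (Icc 1 m)) (hσstar_mem : ∀ u ∈ Icc 1 k, σstar u ∈ Icc 1 m)
    (hσstar_greedy : ∀ u ∈ Icc 1 k, ∑ j ∈ Ico 1 (σstar u), c j < u)
    (hσ_mem : ∀ u ∈ Icc 1 k, σ u ∈ Icc 1 m)
    (hσ_cap : ∀ j ∈ Icc 1 m, #{u ∈ Icc 1 k | σ u = j} ≤ c j) :
    ∑ u ∈ Icc 1 k, l (σstar u) ≤ ∑ u ∈ Icc 1 k, l (σ u) := by
  refine sum_comp_le_sum_comp_of_card_filter_le hl hσ_mem hσstar_mem fun t ht => ?_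
  have hσ_cap_t : ∀ j ∈ Icc 1 t, #{u ∈ Icc 1 k | σ u = j} ≤ c j := fun j hj =>
    hσ_cap j (Icc_subset_Icc_right (mem_Icc.1 ht).2 hj)
  calc #{u ∈ Icc 1 k | σ u ≤ t} ≤ min k (∑ j ∈ Icc 1 t, c j) :=
        le_min ((card_filter_le _ _).trans (by simp))
          (card_filter_le_le_sum_of_card_fiber_le (fun u hu => (mem_Icc.1 (hσ_mem u hu)).1)
            hσ_cap_t)
    _ ≤ #{u ∈ Icc 1 k | σstar u ≤ t} := min_le_card_filter_le_of_sum_Ico_lt hσstar_greedy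

theorem greedy_assignment_optimal_general
    (n m : ℕ) (hn : 1 ≤ n)
    (v l : ℕ → ℝ) (c : ℕ → ℕ)
    (hv_sorted : ∀ u u', 1 ≤ u → u ≤ u' → u' ≤ n → v u' ≤ v u)
    (hv_nonneg : ∀ u, 1 ≤ u → u ≤ n → 0 ≤ v u)
    (hl_sorted : ∀ j j', 1 ≤ j → j ≤ j' → j' ≤ m → l j ≤ l j')
    (σstar : ℕ → ℕ)
    (hσstar_mem : ∀ u ∈ Finset.Icc 1 n, σstar u ∈ Finset.Icc 1 m)
    (hσstar_greedy : ∀ u ∈ Finset.Icc 1 n,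
      ∑ j ∈ Finset.Ico 1 (σstar u), c j < u ∧ u ≤ ∑ j ∈ Finset.Icc 1 (σstar u), c j)
    (σ : ℕ → ℕ)
    (hσ_mem : ∀ u ∈ Finset.Icc 1 n, σ u ∈ Finset.Icc 1 m)
    (hσ_cap : ∀ j ∈ Finset.Icc 1 m,
      ((Finset.Icc 1 n).filter fun u => σ u = j).card ≤ c j) :
    ∑ u ∈ Finset.Icc 1 n, v u * l (σstar u) ≤ ∑ u ∈ Finset.Icc 1 n, v u * l (σ u) := by
  have hv : AntitoneOn v (Icc 1 n) := fun a ha b hb hab =>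
    hv_sorted a b (mem_Icc.1 ha).1 hab (mem_Icc.1 hb).2
  have hl : MonotoneOn l (Icc 1 m) := fun a ha b hb hab =>
    hl_sorted a b (mem_Icc.1 ha).1 hab (mem_Icc.1 hb).2
  refine sum_mul_le_sum_mul_of_antitoneOn hv (hv_nonneg n hn le_rfl) fun k hk => ?_
  have hsub : Icc 1 k ⊆ Icc 1 n := Icc_subset_Icc_right (mem_Icc.1 hk).2
  exact sum_comp_le_sum_comp_of_greedy hl (fun u hu => hσstar_mem u (hsub hu))
    (fun u hu => (hσstar_greedy u (hsub hu)).1) (fun u hu => hσ_mem u (hsub hu))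
    fun j hj => (card_le_card (filter_subset_filter _ hsub)).trans (hσ_cap j hj)

/-- **Optimality of the greedy assignment in parallel networks**: in a sorted parallel
instance (users `1,…,n` with nonincreasing nonnegative values of time, edges `1,…,m` with
nondecreasing latencies and positive integer capacities of total at least `n`), the greedy
assignment `σ*` — which sends user `u` to the unique edge `j` with
`Σ_{j'<j} c_{j'} < u ≤ Σ_{j'≤j} c_{j'}` — minimizes `Σ_u v_u l_{σ(u)}` among all
capacity-respecting assignments `σ`. -/
theorem greedy_assignment_optimal
    (n m : ℕ) (hn : 1 ≤ n) (hm : 1 ≤ m)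
    (v l : ℕ → ℝ) (c : ℕ → ℕ)
    (hv_sorted : ∀ u u', 1 ≤ u → u ≤ u' → u' ≤ n → v u' ≤ v u)
    (hv_nonneg : ∀ u, 1 ≤ u → u ≤ n → 0 ≤ v u)
    (hl_sorted : ∀ j j', 1 ≤ j → j ≤ j' → j' ≤ m → l j ≤ l j')
    (hc_pos : ∀ j, 1 ≤ j → j ≤ m → 1 ≤ c j)
    (hcap : n ≤ ∑ j ∈ Finset.Icc 1 m, c j)
    (σstar : ℕ → ℕ)
    (hσstar_mem : ∀ u ∈ Finset.Icc 1 n, σstar u ∈ Finset.Icc 1 m)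
    (hσstar_greedy : ∀ u ∈ Finset.Icc 1 n,
      ∑ j ∈ Finset.Ico 1 (σstar u), c j < u ∧ u ≤ ∑ j ∈ Finset.Icc 1 (σstar u), c j)
    (σ : ℕ → ℕ)
    (hσ_mem : ∀ u ∈ Finset.Icc 1 n, σ u ∈ Finset.Icc 1 m)
    (hσ_cap : ∀ j ∈ Finset.Icc 1 m,
      ((Finset.Icc 1 n).filter fun u => σ u = j).card ≤ c j) :
    ∑ u ∈ Finset.Icc 1 n, v u * l (σstar u) ≤ ∑ u ∈ Finset.Icc 1 n, v u * l (σ u) :=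
  greedy_assignment_optimal_general n m hn v l c hv_sorted hv_nonneg hl_sorted σstar hσstar_mem
    hσstar_greedy σ hσ_mem hσ_cap
end

section
/- Edge-cost minimization under VCG-form tolls (abstract form): Let m ≥ 1, let l : {1,...,m} → ℝ be nondecreasing, let w_1, ..., w_{m−1} ∈ ℝ, and define tolls τ_j := Σ_{j'=j}^{m−1} w_{j'} (l_{j'+1} − l_{j'}) for 1 ≤ j ≤ m (so τ_m = 0). Suppose v ∈ ℝ and j ∈ {1,...,m} satisfy w_{j'} ≤ v for all j' with j ≤ j' ≤ m−1 and w_{j'} ≥ v for all j' with 1 ≤ j' ≤ j−1. Then v·l_j + τ_j ≤ v·l_k + τ_k for every k ∈ {1,...,m}. -/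
open Finset

/-- **Edge-cost minimization under VCG-form tolls** (abstract form): with `l` nondecreasing
on `{1,…,m}` and tolls `τ_j = Σ_{j'=j}^{m−1} w_{j'} (l (j'+1) − l j')` (so `τ_m = 0`),
a value of time `v` that dominates the boundary weights `w_{j'}` for `j ≤ j' ≤ m−1` and is
dominated by them for `1 ≤ j' ≤ j−1` makes edge `j` a minimizer of `v l_k + τ_k` over
`k ∈ {1,…,m}`. -/
theorem vcg_form_tolls_minimize_edge_cost
    (m : ℕ) (hm : 1 ≤ m)
    (l w : ℕ → ℝ)
    (hl : ∀ j, 1 ≤ j → j < m → l j ≤ l (j + 1))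
    (τ : ℕ → ℝ)
    (hτ : ∀ j, τ j = ∑ j' ∈ Finset.Ico j m, w j' * (l (j' + 1) - l j'))
    (v : ℝ) (j : ℕ) (hj : j ∈ Finset.Icc 1 m)
    (hw_after : ∀ j', j ≤ j' → j' < m → w j' ≤ v)
    (hw_before : ∀ j', 1 ≤ j' → j' < j → v ≤ w j') :
    ∀ k ∈ Finset.Icc 1 m, v * l j + τ j ≤ v * l k + τ k := by
  obtain ⟨hj1, hjm⟩ := Finset.mem_Icc.mp hj
  intro k hk
  obtain ⟨hk1, hkm⟩ := Finset.mem_Icc.mp hk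
  rcases le_or_gt j k with hjk | hkj
  · -- τ j = τ k + ∑_{Ico j k} ...
    have hsplit : τ j = (∑ j' ∈ Finset.Ico j k, w j' * (l (j' + 1) - l j')) + τ k := by
      rw [hτ, hτ, Finset.sum_Ico_consecutive _ hjk hkm]
    have htel : ∑ j' ∈ Finset.Ico j k, (l (j' + 1) - l j') = l k - l j := by
      rw [Finset.sum_Ico_eq_sub _ hjk, Finset.sum_range_sub, Finset.sum_range_sub]; ring
    have hle : ∑ j' ∈ Finset.Ico j k, w j' * (l (j' + 1) - l j')
        ≤ ∑ j' ∈ Finset.Ico j k, v * (l (j' + 1) - l j') := by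
      apply Finset.sum_le_sum
      intro i hi
      obtain ⟨hi1, hi2⟩ := Finset.mem_Ico.mp hi
      have him : i < m := lt_of_lt_of_le hi2 hkm
      have hd : 0 ≤ l (i + 1) - l i := sub_nonneg.mpr (hl i (le_trans hj1 hi1) him)
      exact mul_le_mul_of_nonneg_right (hw_after i hi1 him) hd
    rw [← Finset.mul_sum, htel] at hle
    nlinarith [hle, hsplit]
  · have hkj' : k ≤ j := le_of_lt hkj
    have hsplit : τ k = (∑ j' ∈ Finset.Ico k j, w j' * (l (j' + 1) - l j')) + τ j := by
      rw [hτ, hτ, Finset.sum_Ico_consecutive _ hkj' hjm]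
    have htel : ∑ j' ∈ Finset.Ico k j, (l (j' + 1) - l j') = l j - l k := by
      rw [Finset.sum_Ico_eq_sub _ hkj', Finset.sum_range_sub, Finset.sum_range_sub]; ring
    have hle : ∑ j' ∈ Finset.Ico k j, v * (l (j' + 1) - l j')
        ≤ ∑ j' ∈ Finset.Ico k j, w j' * (l (j' + 1) - l j') := by
      apply Finset.sum_le_sum
      intro i hi
      obtain ⟨hi1, hi2⟩ := Finset.mem_Ico.mp hi
      have him : i < m := lt_of_lt_of_le hi2 hjm
      have hd : 0 ≤ l (i + 1) - l i := sub_nonneg.mpr (hl i (le_trans hk1 hi1) him)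
      exact mul_le_mul_of_nonneg_right (hw_before i (le_trans hk1 hi1) hi2) hd
    rw [← Finset.mul_sum, htel] at hle
    nlinarith [hle, hsplit]
end

section
/- VCG tolls in parallel networks (Theorem, VCG Tolls in Parallel Networks): Consider a sorted parallel instance additionally satisfying Σ_{j=1}^{m−1} c_j < n ≤ Σ_{j=1}^m c_j (so every edge is used by the greedy assignment). For 1 ≤ j ≤ m−1 let b(j) := 1 + Σ_{j'≤j} c_{j'} (the index of the first user assigned by the greedy assignment σ* to edge j+1), and define tolls τ_j := Σ_{j'=j}^{m−1} v_{b(j')} (l_{j'+1} − l_{j'}) for 1 ≤ j ≤ m (so τ_m = 0). Then the greedy assignment is an equilibrium under these tolls: for every user u ∈ {1,...,n} and every edge k ∈ {1,...,m}, v_u·l_{σ*(u)} + τ_{σ*(u)} ≤ v_u·l_k + τ_k. -/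
open Finset

/-- **VCG tolls in parallel networks**: in a sorted parallel instance in which every edge is
used by the greedy assignment (`Σ_{j=1}^{m−1} c_j < n ≤ Σ_{j=1}^m c_j`), setting
`b(j) = 1 + Σ_{j'≤j} c_{j'}` (the first user on edge `j+1` under the greedy assignment
`σ*`) and tolls `τ_j = Σ_{j'=j}^{m−1} v_{b(j')} (l_{j'+1} − l_{j'})` (so `τ_m = 0`), the
greedy assignment is an equilibrium: every user weakly prefers their greedy edge to every
other edge, measuring cost as `v_u l_k + τ_k`. -/
theorem vcg_tolls_parallel_networks
    (n m : ℕ) (hn : 1 ≤ n) (hm : 1 ≤ m)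
    (v l : ℕ → ℝ) (c : ℕ → ℕ)
    (hv_sorted : ∀ u u', 1 ≤ u → u ≤ u' → u' ≤ n → v u' ≤ v u)
    (hv_nonneg : ∀ u, 1 ≤ u → u ≤ n → 0 ≤ v u)
    (hl_sorted : ∀ j j', 1 ≤ j → j ≤ j' → j' ≤ m → l j ≤ l j')
    (hc_pos : ∀ j, 1 ≤ j → j ≤ m → 1 ≤ c j)
    (hlow : ∑ j ∈ Finset.Ico 1 m, c j < n)
    (hcap : n ≤ ∑ j ∈ Finset.Icc 1 m, c j)
    (b : ℕ → ℕ) (hb : ∀ j, b j = 1 + ∑ j' ∈ Finset.Icc 1 j, c j')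
    (τ : ℕ → ℝ)
    (hτ : ∀ j, τ j = ∑ j' ∈ Finset.Ico j m, v (b j') * (l (j' + 1) - l j'))
    (σstar : ℕ → ℕ)
    (hσstar_mem : ∀ u ∈ Finset.Icc 1 n, σstar u ∈ Finset.Icc 1 m)
    (hσstar_greedy : ∀ u ∈ Finset.Icc 1 n,
      ∑ j ∈ Finset.Ico 1 (σstar u), c j < u ∧ u ≤ ∑ j ∈ Finset.Icc 1 (σstar u), c j) :
    ∀ u ∈ Finset.Icc 1 n, ∀ k ∈ Finset.Icc 1 m,
      v u * l (σstar u) + τ (σstar u) ≤ v u * l k + τ k := by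
  intro u hu k hk
  obtain ⟨hu1, hun⟩ := Finset.mem_Icc.mp hu
  obtain ⟨hk1, hkm⟩ := Finset.mem_Icc.mp hk
  obtain ⟨hj1, hjm⟩ := Finset.mem_Icc.mp (hσstar_mem u hu)
  obtain ⟨hgl, hgu⟩ := hσstar_greedy u hu
  set j := σstar u with hjdef
  have hbmono : ∀ a a', a ≤ a' → b a ≤ b a' := by
    intro a a' h
    rw [hb, hb]
    exact Nat.add_le_add_left
      (Finset.sum_le_sum_of_subset (Finset.Icc_subset_Icc_right h)) 1
  have hbn : ∀ j', j' < m → b j' ≤ n := by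
    intro j' h
    rw [hb]
    have : ∑ x ∈ Finset.Icc 1 j', c x ≤ ∑ x ∈ Finset.Ico 1 m, c x := by
      apply Finset.sum_le_sum_of_subset
      intro x hx
      simp only [Finset.mem_Icc, Finset.mem_Ico] at *
      omega
    omega
  have hb1 : ∀ j', 1 ≤ b j' := by intro j'; rw [hb]; omega
  have hτdiff : ∀ a a', a ≤ a' → a' ≤ m →
      τ a = (∑ j' ∈ Finset.Ico a a', v (b j') * (l (j' + 1) - l j')) + τ a' := by
    intro a a' h1 h2
    rw [hτ a, hτ a', ← Finset.sum_Ico_consecutive _ h1 h2]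
  have htele : ∀ a a', a ≤ a' →
      ∑ j' ∈ Finset.Ico a a', (l (j' + 1) - l j') = l a' - l a := by
    intro a a' h
    induction a', h using Nat.le_induction with
    | base => simp
    | succ x hx ih => rw [Finset.sum_Ico_succ_top hx, ih]; ring
  rcases le_total j k with hjk | hkj
  · have e1 := hτdiff j k hjk hkm
    have e2 := htele j k hjk
    have key : ∑ j' ∈ Finset.Ico j k, v (b j') * (l (j' + 1) - l j')
        ≤ ∑ j' ∈ Finset.Ico j k, v u * (l (j' + 1) - l j') := by
      apply Finset.sum_le_sum
      intro i hi
      obtain ⟨hi1, hi2⟩ := Finset.mem_Ico.mp hi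
      have hΔ : 0 ≤ l (i + 1) - l i := by
        have := hl_sorted i (i + 1) (by omega) (by omega) (by omega)
        linarith
      have hub : u ≤ b i := by
        have h1 : u < b j := by rw [hb]; omega
        have := hbmono j i hi1
        omega
      have hvi : v (b i) ≤ v u := hv_sorted u (b i) hu1 hub (hbn i (by omega))
      nlinarith
    rw [← Finset.mul_sum, e2] at key
    have key2 : v u * (l k - l j) = v u * l k - v u * l j := by ring
    linarith
  · have e1 := hτdiff k j hkj hjm
    have e2 := htele k j hkj
    have hico : Finset.Icc 1 (j - 1) = Finset.Ico 1 j := by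
      ext x; simp only [Finset.mem_Icc, Finset.mem_Ico]; omega
    have key : ∑ j' ∈ Finset.Ico k j, v u * (l (j' + 1) - l j')
        ≤ ∑ j' ∈ Finset.Ico k j, v (b j') * (l (j' + 1) - l j') := by
      apply Finset.sum_le_sum
      intro i hi
      obtain ⟨hi1, hi2⟩ := Finset.mem_Ico.mp hi
      have hΔ : 0 ≤ l (i + 1) - l i := by
        have := hl_sorted i (i + 1) (by omega) (by omega) (by omega)
        linarith
      have hbi : b i ≤ u := by
        have h1 : b (j - 1) ≤ u := by rw [hb, hico]; omega
        have := hbmono i (j - 1) (by omega)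
        omega
      have hvi : v u ≤ v (b i) := hv_sorted (b i) u (hb1 i) hbi hun
      nlinarith
    rw [← Finset.mul_sum, e2] at key
    have key2 : v u * (l j - l k) = v u * l j - v u * l k := by ring
    linarith
end

section
/- VCG payment formula in parallel networks (Lemma, VCG payment): Consider a sorted parallel instance additionally satisfying Σ_{j=1}^{m−1} c_j < n ≤ Σ_{j=1}^m c_j. For a set S of users, let OPT(S) denote the minimum of Σ_{u∈S} v_u l_{σ(u)} over all maps σ : S → {1,...,m} with |σ^{-1}(j)| ≤ c_j for each edge j. For 1 ≤ j ≤ m−1 let b(j) := 1 + Σ_{j'≤j} c_{j'}. Then for every user u ∈ {1,...,n}, writing e := σ*(u) for u's edge under the greedy assignment, OPT({1,...,n}) − OPT({1,...,n} \ {u}) = v_u·l_e + Σ_{j=e}^{m−1} v_{b(j)} (l_{j+1} − l_j); equivalently, the VCG payment of user u equals Σ_{j=e}^{m−1} v_{b(j)} (l_{j+1} − l_j). -/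
/-!
Writing `l (σ t) = l 1 + ∑_{j < σ t} (l (j + 1) - l j)` turns the cost of any assignment `σ`
into `(∑ v) l 1 + ∑_j (l (j + 1) - l j) · V_j`, where `V_j` is the total value of the users
placed above edge `j`. At most `C_j = c_1 + ⋯ + c_j` users fit on the edges `1, …, j`, so as the
values are sorted, `V_j` is at least the tail sum `v_{C_j + 1} + ⋯ + v_n`, which is exactly what
the greedy assignment achieves: greedy is optimal, for the whole instance and, after relabelling
the users, for the instance without `u`. Removing `u` shortens the tail above edge `j` by `v_u`
when `u` lies in it and by its first value `v_{b(j)}` otherwise; summing these layer differences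
gives the formula.
-/

open Finset

namespace ParallelNetwork

theorem sum_mul_comp_eq_layers (m : ℕ) (l w : ℕ → ℝ) (S : Finset ℕ) {ρ : ℕ → ℕ}
    (hρ : ∀ t ∈ S, ρ t ∈ Icc 1 m) :
    ∑ t ∈ S, w t * l (ρ t) =
      (∑ t ∈ S, w t) * l 1 + ∑ j ∈ Ico 1 m, (l (j + 1) - l j) * ∑ t ∈ S with j < ρ t, w t := by
  have hlayer : ∀ t ∈ S, l (ρ t) = l 1 + ∑ j ∈ Ico 1 m, if j < ρ t then l (j + 1) - l j else 0 := by
    intro t ht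
    obtain ⟨h1, hm⟩ := mem_Icc.mp (hρ t ht)
    rw [← sum_filter, Ico_filter_lt, min_eq_right hm, sum_Ico_sub l h1]
    ring
  calc ∑ t ∈ S, w t * l (ρ t)
      = ∑ t ∈ S, (w t * l 1 + ∑ j ∈ Ico 1 m, if j < ρ t then (l (j + 1) - l j) * w t else 0) := by
        refine sum_congr rfl fun t ht => ?_
        rw [hlayer t ht, mul_add, mul_sum]
        congr 1
        refine sum_congr rfl fun j _ => ?_
        split_ifs <;> ring
    _ = _ := by
        rw [sum_add_distrib, ← sum_mul, sum_comm]
        simp only [← sum_filter, mul_sum]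

theorem sum_Ico_mul_ite_lt (l f : ℕ → ℝ) (x : ℝ) {m k : ℕ} (hk : k ∈ Icc 1 m) :
    ∑ j ∈ Ico 1 m, (l (j + 1) - l j) * (if j < k then x else f j) =
      x * (l k - l 1) + ∑ j ∈ Ico k m, f j * (l (j + 1) - l j) := by
  obtain ⟨h1, hm⟩ := mem_Icc.mp hk
  rw [← sum_Ico_consecutive _ h1 hm, ← sum_Ico_sub l h1, mul_sum]
  congr 1 <;> refine sum_congr rfl fun j hj => ?_
  · rw [if_pos (mem_Ico.mp hj).2, mul_comm]
  · rw [if_neg (not_lt.mpr (mem_Ico.mp hj).1), mul_comm]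

theorem sum_Ioc_le_sum_of_card_le {w : ℕ → ℝ} {N a : ℕ} {T : Finset ℕ}
    (hw : AntitoneOn w (Set.Icc 1 N)) (hw0 : ∀ t ∈ Set.Icc 1 N, 0 ≤ w t)
    (hT : T ⊆ Icc 1 N) (hcard : N ≤ a + #T) :
    ∑ t ∈ Ioc a N, w t ≤ ∑ t ∈ T, w t := by
  suffices ∑ t ∈ Ioc a N \ T, w t ≤ ∑ t ∈ T \ Ioc a N, w t by
    have := sum_sdiff_sub_sum_sdiff (s₁ := T) (s₂ := Ioc a N) (f := w)
    linarith
  rcases (Ioc a N \ T).eq_empty_or_nonempty with hempty | ⟨y, hy⟩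
  · rw [hempty, sum_empty]
    exact sum_nonneg fun t ht => hw0 t (mem_Icc.mp (hT (mem_sdiff.mp ht).1))
  -- every user outside the tail `Ioc a N` weighs at least `w (a + 1)`, every user inside at most
  have hyA := mem_Ioc.mp (mem_sdiff.mp hy).1
  have hthreshold : (a + 1) ∈ Set.Icc 1 N := ⟨by omega, by omega⟩
  have hcard' : #(Ioc a N \ T) ≤ #(T \ Ioc a N) :=
    card_sdiff_le_card_sdiff_iff.mpr (by rw [Nat.card_Ioc]; omega)
  calc ∑ t ∈ Ioc a N \ T, w t ≤ #(Ioc a N \ T) • w (a + 1) := by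
        refine sum_le_card_nsmul _ _ _ fun t ht => ?_
        have ht := mem_Ioc.mp (mem_sdiff.mp ht).1
        exact hw hthreshold ⟨by omega, ht.2⟩ (by omega)
    _ ≤ #(T \ Ioc a N) • w (a + 1) := nsmul_le_nsmul_left (hw0 _ hthreshold) hcard'
    _ ≤ ∑ t ∈ T \ Ioc a N, w t := by
        refine card_nsmul_le_sum _ _ _ fun t ht => ?_
        obtain ⟨htT, htA⟩ := mem_sdiff.mp ht
        have htI := mem_Icc.mp (hT htT)
        exact hw htI hthreshold (by simp only [mem_Ioc] at htA; omega)

section Greedy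

variable (c : ℕ → ℕ)

def capSum (j : ℕ) : ℕ := ∑ i ∈ Icc 1 j, c i

/-- The greedy assignment `σ*`. -/
noncomputable def greedyEdge (t : ℕ) : ℕ := sInf {j | t ≤ capSum c j}

variable {c}

theorem capSum_mono : Monotone (capSum c) := fun _ _ h =>
  sum_le_sum_of_subset (Icc_subset_Icc_right h)

@[simp]
theorem capSum_zero : capSum c 0 = 0 := by simp [capSum]

theorem capSum_sub_capSum_pred_le (j : ℕ) : capSum c j - capSum c (j - 1) ≤ c j := by
  rcases j with _ | j
  · simp
  · simp [capSum, sum_Icc_succ_top]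

theorem sum_Ico_one_eq_capSum_pred (k : ℕ) : ∑ j ∈ Ico 1 k, c j = capSum c (k - 1) := by
  rcases k with _ | k
  · simp [capSum]
  · rw [capSum, Nat.add_sub_cancel, ← Ico_add_one_right_eq_Icc]

theorem greedyEdge_le_iff {k t j : ℕ} (ht : t ≤ capSum c k) :
    greedyEdge c t ≤ j ↔ t ≤ capSum c j :=
  ⟨fun h => (Nat.sInf_mem (s := {j | t ≤ capSum c j}) ⟨k, ht⟩).trans (capSum_mono h),
    fun h => Nat.sInf_le h⟩

theorem lt_greedyEdge_iff {k t j : ℕ} (ht : t ≤ capSum c k) :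
    j < greedyEdge c t ↔ capSum c j < t := by
  simpa only [not_le] using (greedyEdge_le_iff ht).not

theorem greedyEdge_eq {k t : ℕ} (hlo : capSum c (k - 1) < t) (hhi : t ≤ capSum c k) :
    greedyEdge c t = k := by
  have hle := (greedyEdge_le_iff hhi).mpr hhi
  have hlt := (lt_greedyEdge_iff hhi).mpr hlo
  rcases k with _ | k
  · simp only [zero_tsub, capSum_zero] at hlo hhi; omega
  · omega

theorem greedyEdge_mem {m t : ℕ} (ht : t ∈ Icc 1 (capSum c m)) : greedyEdge c t ∈ Icc 1 m := by
  obtain ⟨h1, hm⟩ := mem_Icc.mp ht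
  have hpos := (lt_greedyEdge_iff (j := 0) hm).mpr (by rw [capSum_zero]; exact h1)
  exact mem_Icc.mpr ⟨hpos, (greedyEdge_le_iff hm).mpr hm⟩

theorem filter_lt_greedyEdge {m N : ℕ} (hN : N ≤ capSum c m) (j : ℕ) :
    {t ∈ Icc 1 N | j < greedyEdge c t} = Ioc (capSum c j) N := by
  ext t
  simp only [mem_filter, mem_Icc, mem_Ioc]
  constructor
  · rintro ⟨⟨_, htN⟩, hj⟩
    exact ⟨(lt_greedyEdge_iff (htN.trans hN)).mp hj, htN⟩
  · rintro ⟨hj, htN⟩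
    exact ⟨⟨by omega, htN⟩, (lt_greedyEdge_iff (htN.trans hN)).mpr hj⟩

theorem card_filter_greedyEdge_eq_le {m N : ℕ} (hN : N ≤ capSum c m) (j : ℕ) :
    #{t ∈ Icc 1 N | greedyEdge c t = j} ≤ c j := by
  have hsub : {t ∈ Icc 1 N | greedyEdge c t = j} ⊆ Ioc (capSum c (j - 1)) (capSum c j) := by
    intro t ht
    obtain ⟨htI, rfl⟩ := mem_filter.mp ht
    have htm := (mem_Icc.mp htI).2.trans hN
    have hpos := (mem_Icc.mp (greedyEdge_mem (mem_Icc.mpr ⟨(mem_Icc.mp htI).1, htm⟩))).1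
    exact mem_Ioc.mpr ⟨(lt_greedyEdge_iff htm).mp (by omega), (greedyEdge_le_iff htm).mp le_rfl⟩
  calc #{t ∈ Icc 1 N | greedyEdge c t = j}
      ≤ #(Ioc (capSum c (j - 1)) (capSum c j)) := card_le_card hsub
    _ ≤ c j := by rw [Nat.card_Ioc]; exact capSum_sub_capSum_pred_le j

end Greedy

section Assignments

variable {m : ℕ} {c : ℕ → ℕ}

def IsAssignment (m : ℕ) (c : ℕ → ℕ) (S : Finset ℕ) (σ : ℕ → ℕ) : Prop :=
  (∀ u ∈ S, σ u ∈ Icc 1 m) ∧ ∀ j, #{u ∈ S | σ u = j} ≤ c j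

def assignmentCosts (m : ℕ) (c : ℕ → ℕ) (v l : ℕ → ℝ) (S : Finset ℕ) : Set ℝ :=
  {x | ∃ σ, IsAssignment m c S σ ∧ ∑ u ∈ S, v u * l (σ u) = x}

theorem IsAssignment.comp {S T : Finset ℕ} {σ e : ℕ → ℕ} (hσ : IsAssignment m c S σ)
    (he : ∀ t ∈ T, e t ∈ S) (hinj : Set.InjOn e T) : IsAssignment m c T (σ ∘ e) :=
  ⟨fun t ht => hσ.1 _ (he t ht), fun j =>
    (card_le_card_of_injOn e (fun t ht => mem_filter.mpr ⟨he t (mem_filter.mp ht).1,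
      (mem_filter.mp ht).2⟩) (hinj.mono (coe_subset.mpr (filter_subset _ _)))).trans (hσ.2 j)⟩

theorem IsAssignment.card_filter_le_le_capSum {S : Finset ℕ} {τ : ℕ → ℕ}
    (hτ : IsAssignment m c S τ) (j : ℕ) : #{t ∈ S | τ t ≤ j} ≤ capSum c j := by
  have hsub : {t ∈ S | τ t ≤ j} ⊆ (Icc 1 j).biUnion fun i => {t ∈ S | τ t = i} := by
    intro t ht
    obtain ⟨htS, htj⟩ := mem_filter.mp ht
    exact mem_biUnion.mpr ⟨τ t, mem_Icc.mpr ⟨(mem_Icc.mp (hτ.1 t htS)).1, htj⟩,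
      mem_filter.mpr ⟨htS, rfl⟩⟩
  calc #{t ∈ S | τ t ≤ j} ≤ ∑ i ∈ Icc 1 j, #{t ∈ S | τ t = i} :=
        (card_le_card hsub).trans card_biUnion_le
    _ ≤ capSum c j := sum_le_sum fun i _ => hτ.2 i

theorem isAssignment_greedyEdge {N : ℕ} (hN : N ≤ capSum c m) :
    IsAssignment m c (Icc 1 N) (greedyEdge c) :=
  ⟨fun _ ht => greedyEdge_mem (mem_Icc.mpr ⟨(mem_Icc.mp ht).1, (mem_Icc.mp ht).2.trans hN⟩),
    card_filter_greedyEdge_eq_le hN⟩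

theorem assignmentCosts_relabel {v l : ℕ → ℝ} {S T : Finset ℕ} {e r : ℕ → ℕ}
    (he : ∀ t ∈ T, e t ∈ S) (hr : ∀ x ∈ S, r x ∈ T)
    (hre : ∀ t ∈ T, r (e t) = t) (her : ∀ x ∈ S, e (r x) = x) :
    assignmentCosts m c (fun t => v (e t)) l T = assignmentCosts m c v l S := by
  ext x
  constructor
  · rintro ⟨τ, hτ, rfl⟩
    refine ⟨τ ∘ r, hτ.comp hr (Set.LeftInvOn.injOn (f₁' := e) her), ?_⟩
    exact sum_nbij' r e hr he her hre fun x hx => by simp only [Function.comp_apply, her x hx]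
  · rintro ⟨σ, hσ, rfl⟩
    exact ⟨σ ∘ e, hσ.comp he (Set.LeftInvOn.injOn (f₁' := r) hre),
      sum_nbij' e r he hr hre her fun _ _ => rfl⟩

end Assignments

section Optimality

variable {m N : ℕ} {c : ℕ → ℕ} {w l : ℕ → ℝ}

theorem sum_mul_greedyEdge_eq_layers (hN : N ≤ capSum c m) :
    ∑ t ∈ Icc 1 N, w t * l (greedyEdge c t) =
      (∑ t ∈ Icc 1 N, w t) * l 1 +
        ∑ j ∈ Ico 1 m, (l (j + 1) - l j) * ∑ t ∈ Ioc (capSum c j) N, w t := by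
  simp only [sum_mul_comp_eq_layers m l w _ (isAssignment_greedyEdge hN).1,
    filter_lt_greedyEdge hN]

theorem sum_mul_greedyEdge_le (hN : N ≤ capSum c m) (hw : AntitoneOn w (Set.Icc 1 N))
    (hw0 : ∀ t ∈ Set.Icc 1 N, 0 ≤ w t) (hl : MonotoneOn l (Set.Icc 1 m)) {τ : ℕ → ℕ}
    (hτ : IsAssignment m c (Icc 1 N) τ) :
    ∑ t ∈ Icc 1 N, w t * l (greedyEdge c t) ≤ ∑ t ∈ Icc 1 N, w t * l (τ t) := by
  rw [sum_mul_greedyEdge_eq_layers hN, sum_mul_comp_eq_layers m l w _ hτ.1]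
  gcongr _ + ∑ j ∈ _, _ * ?_ with j hj
  · obtain ⟨h1, hm⟩ := mem_Ico.mp hj
    exact sub_nonneg.mpr (hl ⟨h1, by omega⟩ ⟨by omega, hm⟩ (Nat.le_succ j))
  · refine sum_Ioc_le_sum_of_card_le hw hw0 (filter_subset _ _) ?_
    -- at most `capSum c j` users fit on the edges `1, …, j`
    have hsplit := card_filter_add_card_filter_not (s := Icc 1 N) (p := fun t => j < τ t)
    have hlow : #{t ∈ Icc 1 N | ¬j < τ t} ≤ capSum c j := by
      simpa only [not_lt] using hτ.card_filter_le_le_capSum j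
    rw [Nat.card_Icc, Nat.add_sub_cancel] at hsplit
    omega

theorem isLeast_assignmentCosts_greedyEdge (hN : N ≤ capSum c m)
    (hw : AntitoneOn w (Set.Icc 1 N)) (hw0 : ∀ t ∈ Set.Icc 1 N, 0 ≤ w t)
    (hl : MonotoneOn l (Set.Icc 1 m)) :
    IsLeast (assignmentCosts m c w l (Icc 1 N)) (∑ t ∈ Icc 1 N, w t * l (greedyEdge c t)) :=
  ⟨⟨greedyEdge c, isAssignment_greedyEdge hN, rfl⟩, by
    rintro _ ⟨τ, hτ, rfl⟩
    exact sum_mul_greedyEdge_le hN hw hw0 hl hτ⟩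

end Optimality

/-- `succAbove u` and `predAbove u` are mutually inverse order-preserving bijections between
`Icc 1 (n - 1)` and `Icc 1 n \ {u}` (cf. `Fin.succAbove`, `Fin.predAbove`). -/
def succAbove (u t : ℕ) : ℕ := if t < u then t else t + 1

def predAbove (u x : ℕ) : ℕ := if u < x then x - 1 else x

theorem succAbove_mono (u : ℕ) : Monotone (succAbove u) := by
  intro s t hst
  unfold succAbove
  split_ifs <;> omega

theorem sum_Ioc_succAbove {v : ℕ → ℝ} {n u a : ℕ} (hu : u ∈ Icc 1 n) (ha : a < n) :
    ∑ t ∈ Ioc a (n - 1), v (succAbove u t) =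
      ∑ x ∈ Ioc a n, v x - if a < u then v u else v (a + 1) := by
  obtain ⟨hu1, hun⟩ := mem_Icc.mp hu
  have hp : (if a < u then u else a + 1) ∈ Ioc a n := by
    rw [mem_Ioc]; split_ifs <;> omega
  rw [← apply_ite v, ← sum_erase_eq_sub hp]
  refine sum_nbij' (succAbove u) (predAbove u) ?_ ?_ ?_ ?_ fun _ _ => rfl <;>
    intro x hx <;> simp only [mem_Ioc, mem_erase, succAbove, predAbove] at hx ⊢ <;>
    split_ifs at hx ⊢ <;> omega

theorem assignmentCosts_sdiff_singleton {m : ℕ} {c : ℕ → ℕ} {v l : ℕ → ℝ} {n u : ℕ}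
    (hu : u ∈ Icc 1 n) :
    assignmentCosts m c v l (Icc 1 n \ {u}) =
      assignmentCosts m c (fun t => v (succAbove u t)) l (Icc 1 (n - 1)) := by
  obtain ⟨hu1, hun⟩ := mem_Icc.mp hu
  refine (assignmentCosts_relabel (r := predAbove u) ?_ ?_ ?_ ?_).symm <;>
    intro x hx <;> simp only [mem_Icc, mem_sdiff, mem_singleton, succAbove, predAbove] at hx ⊢ <;>
    split_ifs <;> omega

theorem sum_mul_greedyEdge_sub_succAbove {m n u : ℕ} {c : ℕ → ℕ} {v l : ℕ → ℝ}
    (hu : u ∈ Icc 1 n) (hlow : capSum c (m - 1) < n) (hcap : n ≤ capSum c m) :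
    ∑ t ∈ Icc 1 n, v t * l (greedyEdge c t) -
        ∑ t ∈ Icc 1 (n - 1), v (succAbove u t) * l (greedyEdge c t) =
      v u * l (greedyEdge c u) +
        ∑ j ∈ Ico (greedyEdge c u) m, v (capSum c j + 1) * (l (j + 1) - l j) := by
  obtain ⟨hu1, hun⟩ := mem_Icc.mp hu
  have hucap : u ≤ capSum c m := hun.trans hcap
  have htotal : ∑ t ∈ Icc 1 (n - 1), v (succAbove u t) = ∑ x ∈ Icc 1 n, v x - v u := by
    have hu0 : 0 < u := hu1
    simpa only [← Icc_add_one_left_eq_Ioc, zero_add, if_pos hu0] using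
      sum_Ioc_succAbove (v := v) hu (a := 0) (by omega)
  have hlayers : ∑ j ∈ Ico 1 m, (l (j + 1) - l j) *
        ∑ t ∈ Ioc (capSum c j) (n - 1), v (succAbove u t) =
      ∑ j ∈ Ico 1 m, (l (j + 1) - l j) * ∑ x ∈ Ioc (capSum c j) n, v x -
        (v u * (l (greedyEdge c u) - l 1) +
          ∑ j ∈ Ico (greedyEdge c u) m, v (capSum c j + 1) * (l (j + 1) - l j)) := by
    rw [← sum_Ico_mul_ite_lt l _ _ (greedyEdge_mem (mem_Icc.mpr ⟨hu1, hucap⟩)),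
      ← sum_sub_distrib]
    refine sum_congr rfl fun j hj => ?_
    have hj : capSum c j < n := (capSum_mono (Nat.le_sub_one_of_lt (mem_Ico.mp hj).2)).trans_lt hlow
    simp only [sum_Ioc_succAbove hu hj, lt_greedyEdge_iff hucap, mul_sub]
  rw [sum_mul_greedyEdge_eq_layers hcap, sum_mul_greedyEdge_eq_layers ((Nat.sub_le n 1).trans hcap),
    htotal, hlayers]
  ring

end ParallelNetwork

open ParallelNetwork

theorem vcg_payment_formula_parallel_networks_general
    (n m : ℕ) (v l : ℕ → ℝ) (c : ℕ → ℕ)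
    (hv_sorted : ∀ u u', 1 ≤ u → u ≤ u' → u' ≤ n → v u' ≤ v u)
    (hv_nonneg : ∀ u, 1 ≤ u → u ≤ n → 0 ≤ v u)
    (hl_sorted : ∀ j j', 1 ≤ j → j ≤ j' → j' ≤ m → l j ≤ l j')
    (hlow : ∑ j ∈ Finset.Ico 1 m, c j < n)
    (hcap : n ≤ ∑ j ∈ Finset.Icc 1 m, c j)
    (b : ℕ → ℕ) (hb : ∀ j, b j = 1 + ∑ j' ∈ Finset.Icc 1 j, c j')
    (σstar : ℕ → ℕ)
    (hσstar_greedy : ∀ u ∈ Finset.Icc 1 n,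
      ∑ j ∈ Finset.Ico 1 (σstar u), c j < u ∧ u ≤ ∑ j ∈ Finset.Icc 1 (σstar u), c j)
    (OPT : Finset ℕ → ℝ)
    (hOPT : ∀ S ⊆ Finset.Icc 1 n,
      (∃ σ : ℕ → ℕ, (∀ u ∈ S, σ u ∈ Finset.Icc 1 m) ∧
          (∀ j, (S.filter fun u => σ u = j).card ≤ c j) ∧
          ∑ u ∈ S, v u * l (σ u) = OPT S) ∧
        ∀ σ : ℕ → ℕ, (∀ u ∈ S, σ u ∈ Finset.Icc 1 m) →
          (∀ j, (S.filter fun u => σ u = j).card ≤ c j) →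
          OPT S ≤ ∑ u ∈ S, v u * l (σ u)) :
    ∀ u ∈ Finset.Icc 1 n,
      OPT (Finset.Icc 1 n) - OPT (Finset.Icc 1 n \ {u}) =
        v u * l (σstar u) +
          ∑ j ∈ Finset.Ico (σstar u) m, v (b j) * (l (j + 1) - l j) := by
  intro u hu
  have hv : AntitoneOn v (Set.Icc 1 n) := fun x hx y hy hxy => hv_sorted x y hx.1 hxy hy.2
  have hv0 : ∀ t ∈ Set.Icc 1 n, 0 ≤ v t := fun t ht => hv_nonneg t ht.1 ht.2
  have hl : MonotoneOn l (Set.Icc 1 m) := fun x hx y hy hxy => hl_sorted x y hx.1 hxy hy.2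
  have hOPT_isLeast : ∀ S ⊆ Icc 1 n, IsLeast (assignmentCosts m c v l S) (OPT S) := fun S hS =>
    let ⟨⟨σ, hσm, hσc, hσ⟩, hmin⟩ := hOPT S hS
    ⟨⟨σ, ⟨hσm, hσc⟩, hσ⟩, by rintro _ ⟨τ, hτ, rfl⟩; exact hmin τ hτ.1 hτ.2⟩
  have hfull : OPT (Icc 1 n) = ∑ t ∈ Icc 1 n, v t * l (greedyEdge c t) :=
    (hOPT_isLeast _ subset_rfl).unique (isLeast_assignmentCosts_greedyEdge hcap hv hv0 hl)
  have hdel : OPT (Icc 1 n \ {u}) =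
      ∑ t ∈ Icc 1 (n - 1), v (succAbove u t) * l (greedyEdge c t) := by
    refine (hOPT_isLeast _ sdiff_subset).unique ?_
    rw [assignmentCosts_sdiff_singleton hu]
    have hmaps : Set.MapsTo (succAbove u) (Set.Icc 1 (n - 1)) (Set.Icc 1 n) := fun t ht => by
      simp only [Set.mem_Icc, succAbove] at ht ⊢; split_ifs <;> omega
    exact isLeast_assignmentCosts_greedyEdge ((Nat.sub_le n 1).trans hcap)
      (hv.comp_MonotoneOn ((succAbove_mono u).monotoneOn _) hmaps)
      (fun _ ht => hv0 _ (hmaps ht)) hl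
  have hσ : σstar u = greedyEdge c u := by
    obtain ⟨hlo, hhi⟩ := hσstar_greedy u hu
    rw [sum_Ico_one_eq_capSum_pred] at hlo
    exact (greedyEdge_eq hlo hhi).symm
  rw [hfull, hdel, sum_mul_greedyEdge_sub_succAbove hu (by rwa [← sum_Ico_one_eq_capSum_pred]) hcap,
    hσ]
  simp only [hb, add_comm 1, capSum]

/-- **VCG payment formula in parallel networks**: in a sorted parallel instance in which
every edge is used by the greedy assignment (`Σ_{j=1}^{m−1} c_j < n ≤ Σ_{j=1}^m c_j`),
with `OPT S` the minimum cost of capacity-respecting assignments of the user set `S` and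
`b(j) = 1 + Σ_{j'≤j} c_{j'}`, for every user `u` with greedy edge `e = σ*(u)` one has
`OPT({1,…,n}) − OPT({1,…,n} \ {u}) = v_u l_e + Σ_{j=e}^{m−1} v_{b(j)} (l_{j+1} − l_j)`;
i.e. the VCG payment of `u` equals `Σ_{j=e}^{m−1} v_{b(j)} (l_{j+1} − l_j)`. -/
theorem vcg_payment_formula_parallel_networks
    (n m : ℕ) (hn : 1 ≤ n) (hm : 1 ≤ m)
    (v l : ℕ → ℝ) (c : ℕ → ℕ)
    (hv_sorted : ∀ u u', 1 ≤ u → u ≤ u' → u' ≤ n → v u' ≤ v u)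
    (hv_nonneg : ∀ u, 1 ≤ u → u ≤ n → 0 ≤ v u)
    (hl_sorted : ∀ j j', 1 ≤ j → j ≤ j' → j' ≤ m → l j ≤ l j')
    (hc_pos : ∀ j, 1 ≤ j → j ≤ m → 1 ≤ c j)
    (hlow : ∑ j ∈ Finset.Ico 1 m, c j < n)
    (hcap : n ≤ ∑ j ∈ Finset.Icc 1 m, c j)
    (b : ℕ → ℕ) (hb : ∀ j, b j = 1 + ∑ j' ∈ Finset.Icc 1 j, c j')
    (σstar : ℕ → ℕ)
    (hσstar_mem : ∀ u ∈ Finset.Icc 1 n, σstar u ∈ Finset.Icc 1 m)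
    (hσstar_greedy : ∀ u ∈ Finset.Icc 1 n,
      ∑ j ∈ Finset.Ico 1 (σstar u), c j < u ∧ u ≤ ∑ j ∈ Finset.Icc 1 (σstar u), c j)
    (OPT : Finset ℕ → ℝ)
    (hOPT : ∀ S ⊆ Finset.Icc 1 n,
      (∃ σ : ℕ → ℕ, (∀ u ∈ S, σ u ∈ Finset.Icc 1 m) ∧
          (∀ j, (S.filter fun u => σ u = j).card ≤ c j) ∧
          ∑ u ∈ S, v u * l (σ u) = OPT S) ∧
        ∀ σ : ℕ → ℕ, (∀ u ∈ S, σ u ∈ Finset.Icc 1 m) →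
          (∀ j, (S.filter fun u => σ u = j).card ≤ c j) →
          OPT S ≤ ∑ u ∈ S, v u * l (σ u)) :
    ∀ u ∈ Finset.Icc 1 n,
      OPT (Finset.Icc 1 n) - OPT (Finset.Icc 1 n \ {u}) =
        v u * l (σstar u) +
          ∑ j ∈ Finset.Ico (σstar u) m, v (b j) * (l (j + 1) - l j) :=
  vcg_payment_formula_parallel_networks_general n m v l c hv_sorted hv_nonneg hl_sorted hlow hcap b
    hb σstar hσstar_greedy OPT hOPT
end
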